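/- arXiv:2503.03414 — 6 statements merged into one kernel-verified Lean document; each statement's English description precedes it below -/
import Mathlib

section
/- For any holomorphic map f : 𝔻 → 𝔻, the function G(f)(z) = log((1-|f(z)|^2)/(1-|z|^2)) satisfies the Laplacian identity Δ G(f)(z) = 4(1 - D_h f(z)^2)/(1-|z|^2)^2 for all z in 𝔻, where D_h f(z) = (1-|z|^2)|f'(z)|/(1-|f(z)|^2). -/
open Complex MeasureTheory Metric Set Filter
open Topology
set_option maxHeartbeats 1000000

lemma core (g : ℂ → ℂ) (hg : DifferentiableOn ℂ g (ball (0:ℂ) 1))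
    (hmap : ∀ w ∈ ball (0:ℂ) 1, g w ∈ ball (0:ℂ) 1) {z : ℂ} (hz : z ∈ ball (0:ℂ) 1) :
    ∃ M : ℂ →L[ℝ] ℂ →L[ℝ] ℝ,
      HasFDerivAt (fderiv ℝ (fun w => Real.log (1 - ‖g w‖ ^ 2))) M z ∧
      (∀ x ∈ ball (0:ℂ) 1,
        DifferentiableAt ℝ (fun w => Real.log (1 - ‖g w‖ ^ 2)) x) ∧
      M 1 1 + M Complex.I Complex.I
        = -4 * ‖deriv g z‖ ^ 2 / (1 - ‖g z‖ ^ 2) ^ 2 := by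
  set u : ℂ → ℝ := fun w => Real.log (1 - ‖g w‖ ^ 2) with hu
  have hpos : ∀ x ∈ ball (0:ℂ) 1, 0 < 1 - ‖g x‖ ^ 2 := by
    intro x hx
    have := hmap x hx
    rw [mem_ball_zero_iff] at this
    nlinarith [norm_nonneg (g x)]
  have hkey : ∀ x ∈ ball (0:ℂ) 1, HasFDerivAt u
      ((1 - ‖g x‖ ^ 2)⁻¹ •
        ((0 : ℂ →L[ℝ] ℝ) - 2 • ((innerSL ℝ (g x)).comp
          (ContinuousLinearMap.restrictScalars ℝ ((1 : ℂ →L[ℂ] ℂ).smulRight (deriv g x)))))) x := by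
    intro x hx
    have hd : HasFDerivAt g (ContinuousLinearMap.restrictScalars ℝ
        ((1 : ℂ →L[ℂ] ℂ).smulRight (deriv g x))) x :=
      ((hg.differentiableAt (isOpen_ball.mem_nhds hx)).hasDerivAt.hasFDerivAt).restrictScalars ℝ
    have hns : HasFDerivAt (fun w => ‖g w‖ ^ 2)
        (2 • ((innerSL ℝ (g x)).comp
          (ContinuousLinearMap.restrictScalars ℝ ((1 : ℂ →L[ℂ] ℂ).smulRight (deriv g x))))) x :=
      hd.norm_sq
    have hs : HasFDerivAt (fun w => 1 - ‖g w‖ ^ 2)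
        ((0 : ℂ →L[ℝ] ℝ) - 2 • ((innerSL ℝ (g x)).comp
          (ContinuousLinearMap.restrictScalars ℝ ((1 : ℂ →L[ℂ] ℂ).smulRight (deriv g x))))) x := by
      exact (hasFDerivAt_const (1:ℝ) x).sub hns
    exact hs.log (ne_of_gt (hpos x hx))
  have hdiff : ∀ x ∈ ball (0:ℂ) 1, DifferentiableAt ℝ u x :=
    fun x hx => (hkey x hx).differentiableAt
  -- first derivative evaluated
  have hfd : ∀ w : ℂ, (fun x => fderiv ℝ u x w) =ᶠ[𝓝 z]
      fun x => (1 - ‖g x‖ ^ 2)⁻¹ *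
        (-(2 * ((starRingEnd ℂ) (g x) * (deriv g x * w)).re)) := by
    intro w
    filter_upwards [isOpen_ball.mem_nhds hz] with x hx
    rw [(hkey x hx).fderiv]
    simp [real_inner_eq_re_inner ℂ, RCLike.inner_apply, mul_comm]
    left; ring
  -- smoothness
  have han : AnalyticOnNhd ℂ g (ball (0:ℂ) 1) := hg.analyticOnNhd isOpen_ball
  have hgC : ContDiffAt ℝ 2 g z := ((han z hz).contDiffAt).restrict_scalars ℝ
  have hsC : ContDiffAt ℝ 2 (fun x => 1 - ‖g x‖ ^ 2) z := by
    exact contDiffAt_const.sub ((contDiff_norm_sq ℝ).contDiffAt.comp z hgC)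
  have huC : ContDiffAt ℝ 2 u z := by
    have := ((Real.contDiffAt_log (n := 2)).2 (ne_of_gt (hpos z hz))).comp z hsC; exact this
  have hM : HasFDerivAt (fderiv ℝ u) (fderiv ℝ (fderiv ℝ u) z) z := by
    have : ContDiffAt ℝ 1 (fderiv ℝ u) z := huC.fderiv_right (by norm_num)
    exact (this.differentiableAt one_ne_zero).hasFDerivAt
  refine ⟨fderiv ℝ (fderiv ℝ u) z, hM, hdiff, ?_⟩
  -- second derivative values
  set a := g z with ha
  set b := deriv g z with hb
  set c := deriv (deriv g) z with hc
  have hbz : HasDerivAt (deriv g) c z := ((han.deriv z hz).differentiableAt).hasDerivAt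
  have hdz : HasFDerivAt g (ContinuousLinearMap.restrictScalars ℝ
      ((1 : ℂ →L[ℂ] ℂ).smulRight b)) z :=
    ((hg.differentiableAt (isOpen_ball.mem_nhds hz)).hasDerivAt.hasFDerivAt).restrictScalars ℝ
  have hsz : HasFDerivAt (fun w => 1 - ‖g w‖ ^ 2)
      ((0 : ℂ →L[ℝ] ℝ) - 2 • ((innerSL ℝ a).comp
        (ContinuousLinearMap.restrictScalars ℝ ((1 : ℂ →L[ℂ] ℂ).smulRight b)))) z := by
    exact (hasFDerivAt_const (1:ℝ) z).sub hdz.norm_sq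
  have hval : ∀ v w : ℂ, fderiv ℝ (fderiv ℝ u) z v w =
      (1 - ‖a‖ ^ 2)⁻¹ *
        (-(2 * ((starRingEnd ℂ) a * (w * (v * c)) + b * w * ((starRingEnd ℂ) (b * v))).re))
      + (-(2 * ((starRingEnd ℂ) a * (b * w)).re)) *
        (-((1 - ‖a‖ ^ 2) ^ 2)⁻¹ *
          (-(2 * ((starRingEnd ℂ) a * (b * v)).re))) := by
    intro v w
    set Db := ContinuousLinearMap.restrictScalars ℝ ((1 : ℂ →L[ℂ] ℂ).smulRight b) with hDb
    set Dc := ContinuousLinearMap.restrictScalars ℝ ((1 : ℂ →L[ℂ] ℂ).smulRight c) with hDc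
    set S : ℂ →L[ℝ] ℝ := (0 : ℂ →L[ℝ] ℝ) - 2 • ((innerSL ℝ a).comp Db) with hS
    have h1 : HasFDerivAt (fun x => (1 - ‖g x‖ ^ 2)⁻¹)
        ((-((1 - ‖a‖ ^ 2) ^ 2)⁻¹) • S) z :=
      (hasDerivAt_inv (ne_of_gt (hpos z hz))).comp_hasFDerivAt z hsz
    have hconj : HasFDerivAt (fun x => (starRingEnd ℂ) (g x))
        ((Complex.conjCLE.toContinuousLinearMap).comp Db) z := by
      have := (Complex.conjCLE.toContinuousLinearMap.hasFDerivAt).comp z hdz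
      simpa only [Function.comp_def, ContinuousLinearEquiv.coe_coe, Complex.conjCLE_apply] using this
    have hbw : HasFDerivAt (fun x => deriv g x * w) (w • Dc) z :=
      (hbz.hasFDerivAt.restrictScalars ℝ).mul_const w
    have hA : HasFDerivAt (fun x => (starRingEnd ℂ) (g x) * (deriv g x * w))
        ((starRingEnd ℂ) a • (w • Dc) + (b * w) • ((Complex.conjCLE.toContinuousLinearMap).comp Db))
        z := hconj.mul hbw
    have hre : HasFDerivAt (fun x => ((starRingEnd ℂ) (g x) * (deriv g x * w)).re)
        (Complex.reCLM.comp ((starRingEnd ℂ) a • (w • Dc) +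
          (b * w) • ((Complex.conjCLE.toContinuousLinearMap).comp Db))) z := by
      have := (Complex.reCLM.hasFDerivAt).comp z hA
      simpa only [Function.comp_def, Complex.reCLM_apply] using this
    have h2 : HasFDerivAt (fun x => -(2 * ((starRingEnd ℂ) (g x) * (deriv g x * w)).re))
        (-((2:ℝ) • (Complex.reCLM.comp ((starRingEnd ℂ) a • (w • Dc) +
          (b * w) • ((Complex.conjCLE.toContinuousLinearMap).comp Db))))) z :=
      (hre.const_mul 2).neg
    have hprod := h1.mul h2
    have hcomb : HasFDerivAt (fun x => fderiv ℝ u x w)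
        ((fun x => (1 - ‖g x‖ ^ 2)⁻¹) z •
            (-((2:ℝ) • (Complex.reCLM.comp ((starRingEnd ℂ) a • (w • Dc) +
              (b * w) • ((Complex.conjCLE.toContinuousLinearMap).comp Db))))) +
          (fun x => -(2 * ((starRingEnd ℂ) (g x) * (deriv g x * w)).re)) z •
            ((-((1 - ‖a‖ ^ 2) ^ 2)⁻¹) • S)) z :=
      hprod.congr_of_eventuallyEq (hfd w)
    have hMw : HasFDerivAt (fun x => fderiv ℝ u x w)
        ((ContinuousLinearMap.apply ℝ ℝ w).comp (fderiv ℝ (fderiv ℝ u) z)) z := by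
      have := ((ContinuousLinearMap.apply ℝ ℝ w).hasFDerivAt).comp z hM
      simpa only [Function.comp_def, ContinuousLinearMap.apply_apply] using this
    have huniq := hMw.unique hcomb
    have hvw : fderiv ℝ (fderiv ℝ u) z v w =
        ((ContinuousLinearMap.apply ℝ ℝ w).comp (fderiv ℝ (fderiv ℝ u) z)) v := rfl
    rw [hvw, huniq]
    simp only [ContinuousLinearMap.add_apply, ContinuousLinearMap.coe_smul', Pi.smul_apply,
      ContinuousLinearMap.comp_apply, ContinuousLinearMap.smul_apply, ContinuousLinearMap.coe_sub',
      Pi.sub_apply, ContinuousLinearMap.zero_apply, ContinuousLinearMap.coe_restrictScalars',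
      ContinuousLinearMap.smulRight_apply, ContinuousLinearMap.one_apply, innerSL_apply_apply,
      Complex.reCLM_apply, Complex.conjCLE_apply, ContinuousLinearEquiv.coe_coe,
      smul_eq_mul, real_inner_eq_re_inner ℂ, RCLike.inner_apply, hS, hDb, hDc,
      ContinuousLinearMap.neg_apply, RCLike.re_to_complex]
    simp only [Complex.mul_re, Complex.mul_im, Complex.conj_re, Complex.conj_im,
      Complex.add_re, Complex.add_im]
    have hsne : (1 - ‖a‖ ^ 2) ≠ 0 := ne_of_gt (hpos z hz)
    simp only [← ha, ← hb]
    field_simp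
    ring
  have habs : ‖a‖ ^ 2 = a.re ^ 2 + a.im ^ 2 := by
    rw [Complex.sq_norm, Complex.normSq_apply]; ring
  have habsb : ‖b‖ ^ 2 = b.re ^ 2 + b.im ^ 2 := by
    rw [Complex.sq_norm, Complex.normSq_apply]; ring
  have hsne : (1 : ℝ) - (a.re ^ 2 + a.im ^ 2) ≠ 0 := by
    have := hpos z hz
    rw [← ha] at this
    rw [habs] at this
    exact ne_of_gt this
  rw [hval 1 1, hval Complex.I Complex.I, habs, habsb]
  simp only [Complex.mul_re, Complex.mul_im, Complex.conj_re, Complex.conj_im,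
    Complex.add_re, Complex.add_im, Complex.I_re, Complex.I_im, Complex.one_re, Complex.one_im]
  field_simp
  ring


/-- The hyperbolic derivative of `f` at `z`. -/
noncomputable def hypDeriv (f : ℂ → ℂ) (z : ℂ) : ℝ :=
  (1 - ‖z‖ ^ 2) * ‖deriv f z‖ / (1 - ‖f z‖ ^ 2)

/-- The Laplacian of a function `u : ℂ → ℝ`, computed with respect to the real coordinates. -/
noncomputable def lap (u : ℂ → ℝ) (z : ℂ) : ℝ :=
  iteratedFDeriv ℝ 2 u z ![1, 1] + iteratedFDeriv ℝ 2 u z ![Complex.I, Complex.I]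

/-- For `G(f)(z) = log((1-|f z|²)/(1-|z|²))` one has
`Δ G(f)(z) = 4 (1 - D_h f(z)²)/(1-|z|²)²` on the unit disc. -/
theorem laplacian_identity_G
    (f : ℂ → ℂ) (hf : DifferentiableOn ℂ f (ball (0:ℂ) 1))
    (hmap : ∀ z ∈ ball (0:ℂ) 1, f z ∈ ball (0:ℂ) 1) :
    ∀ z ∈ ball (0:ℂ) 1,
      lap (fun w => Real.log ((1 - ‖f w‖ ^ 2) / (1 - ‖w‖ ^ 2))) z
        = 4 * (1 - hypDeriv f z ^ 2) / (1 - ‖z‖ ^ 2) ^ 2 := by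
  intro z hz
  have hpos1 : ∀ x ∈ ball (0:ℂ) 1, 0 < 1 - ‖f x‖ ^ 2 := by
    intro x hx
    have := hmap x hx
    rw [mem_ball_zero_iff] at this
    nlinarith [norm_nonneg (f x)]
  have hpos2 : ∀ x : ℂ, x ∈ ball (0:ℂ) 1 → 0 < 1 - ‖x‖ ^ 2 := by
    intro x hx
    rw [mem_ball_zero_iff] at hx
    nlinarith [norm_nonneg x]
  obtain ⟨M₁, hM₁, hd₁, hv₁⟩ := core f hf hmap hz
  obtain ⟨M₂, hM₂, hd₂, hv₂⟩ := core (fun w => w) differentiable_id.differentiableOn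
    (fun w hw => hw) hz

  rw [deriv_id''] at hv₂
  simp only [norm_one, one_pow] at hv₂
  have hGfe : fderiv ℝ (fun w => Real.log ((1 - ‖f w‖ ^ 2) / (1 - ‖w‖ ^ 2)))
      =ᶠ[𝓝 z] fun x => fderiv ℝ (fun w => Real.log (1 - ‖f w‖ ^ 2)) x
        - fderiv ℝ (fun w => Real.log (1 - ‖w‖ ^ 2)) x := by
    filter_upwards [isOpen_ball.mem_nhds hz] with x hx
    have h1 : (fun w => Real.log ((1 - ‖f w‖ ^ 2) / (1 - ‖w‖ ^ 2)))
        =ᶠ[𝓝 x] fun w => Real.log (1 - ‖f w‖ ^ 2)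
          - Real.log (1 - ‖w‖ ^ 2) := by
      filter_upwards [isOpen_ball.mem_nhds hx] with y hy
      exact Real.log_div (hpos1 y hy).ne' (hpos2 y hy).ne'
    rw [h1.fderiv_eq, fderiv_fun_sub (hd₁ x hx) (hd₂ x hx)]
  have hMG : HasFDerivAt
      (fderiv ℝ (fun w => Real.log ((1 - ‖f w‖ ^ 2) / (1 - ‖w‖ ^ 2))))
      (M₁ - M₂) z := (hM₁.sub hM₂).congr_of_eventuallyEq hGfe
  have hlap : lap (fun w => Real.log ((1 - ‖f w‖ ^ 2) / (1 - ‖w‖ ^ 2))) z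
      = (M₁ 1 1 + M₁ I I) - (M₂ 1 1 + M₂ I I) := by
    rw [lap, iteratedFDeriv_two_apply, iteratedFDeriv_two_apply, hMG.fderiv]
    simp [Matrix.cons_val_zero, Matrix.cons_val_one, Matrix.head_cons]
    ring
  rw [hlap, hv₁, hv₂, hypDeriv]
  have h1 := (hpos1 z hz).ne'
  have h2 := (hpos2 z hz).ne'
  field_simp
  ring
end

section
/- There exists a universal constant C > 0 such that for any holomorphic map f : 𝔻 → 𝔻 and any z, w ∈ 𝔻, one has |G(f)(z) - G(f)(w)| ≤ C · d_h(z, w), where G(f)(z) = log((1-|f(z)|^2)/(1-|z|^2)) and d_h denotes the hyperbolic distance on 𝔻. -/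
open Complex MeasureTheory Metric Set Filter

/-- The pseudo-hyperbolic distance on the unit disc. -/
noncomputable def pseudoDist (z w : ℂ) : ℝ :=
  ‖z - w‖ / ‖1 - (starRingEnd ℂ) w * z‖

/-- The hyperbolic distance on the unit disc. -/
noncomputable def hypDist (z w : ℂ) : ℝ :=
  Real.log ((1 + pseudoDist z w) / (1 - pseudoDist z w))

namespace GHyp

lemma normSq_identity (z w : ℂ) :
    Complex.normSq (1 - (starRingEnd ℂ) w * z) - Complex.normSq (z - w)
      = (1 - Complex.normSq z) * (1 - Complex.normSq w) := by
  simp only [Complex.normSq_apply, Complex.sub_re, Complex.sub_im, Complex.one_re,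
    Complex.one_im, Complex.mul_re, Complex.mul_im, Complex.conj_re, Complex.conj_im]
  ring

lemma normSq_lt_one {z : ℂ} (hz : z ∈ ball (0:ℂ) 1) : Complex.normSq z < 1 := by
  have h : ‖z‖ < 1 := by simpa using mem_ball_zero_iff.1 hz
  have h0 := norm_nonneg z
  rw [← Complex.sq_norm]
  nlinarith

lemma abs_sub_lt {z w : ℂ} (hz : z ∈ ball (0:ℂ) 1) (hw : w ∈ ball (0:ℂ) 1) :
    ‖z - w‖ < ‖1 - (starRingEnd ℂ) w * z‖ := by
  have h1 : Complex.normSq (z - w) < Complex.normSq (1 - (starRingEnd ℂ) w * z) := by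
    have := normSq_identity z w
    nlinarith [normSq_lt_one hz, normSq_lt_one hw]
  rw [Complex.norm_def, Complex.norm_def]
  exact Real.sqrt_lt_sqrt (Complex.normSq_nonneg _) h1

lemma denom_pos {z w : ℂ} (hz : z ∈ ball (0:ℂ) 1) (hw : w ∈ ball (0:ℂ) 1) :
    0 < ‖1 - (starRingEnd ℂ) w * z‖ :=
  lt_of_le_of_lt (norm_nonneg _) (abs_sub_lt hz hw)

lemma pseudo_nonneg (z w : ℂ) : 0 ≤ pseudoDist z w :=
  div_nonneg (norm_nonneg _) (norm_nonneg _)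

lemma pseudo_lt_one {z w : ℂ} (hz : z ∈ ball (0:ℂ) 1) (hw : w ∈ ball (0:ℂ) 1) :
    pseudoDist z w < 1 :=
  (div_lt_one (denom_pos hz hw)).2 (abs_sub_lt hz hw)

lemma pseudo_symm (z w : ℂ) : pseudoDist z w = pseudoDist w z := by
  unfold pseudoDist
  rw [← Complex.norm_conj (1 - (starRingEnd ℂ) w * z)]
  congr 1
  · exact norm_sub_rev z w
  · congr 1
    simp [map_sub, map_mul, mul_comm]

/-- The Möbius transform. -/
noncomputable def mobius (a z : ℂ) : ℂ := (z - a) / (1 - (starRingEnd ℂ) a * z)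

lemma abs_mobius (a z : ℂ) : ‖mobius a z‖ = pseudoDist z a := by
  simp [mobius, pseudoDist, norm_div]

lemma mobius_denom_ne {a z : ℂ} (ha : a ∈ ball (0:ℂ) 1) (hz : z ∈ ball (0:ℂ) 1) :
    (1 : ℂ) - (starRingEnd ℂ) a * z ≠ 0 := by
  intro h
  exact (denom_pos hz ha).ne' (by rw [h, norm_zero])

lemma mobius_diffOn {a : ℂ} (ha : a ∈ ball (0:ℂ) 1) :
    DifferentiableOn ℂ (mobius a) (ball (0:ℂ) 1) := by
  apply DifferentiableOn.div
  · exact (differentiable_id.sub_const a).differentiableOn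
  · exact ((differentiable_const _).sub ((differentiable_const _).mul differentiable_id)).differentiableOn
  · intro z hz; exact mobius_denom_ne ha hz

lemma mobius_mapsTo {a : ℂ} (ha : a ∈ ball (0:ℂ) 1) :
    MapsTo (mobius a) (ball (0:ℂ) 1) (ball (0:ℂ) 1) := by
  intro z hz
  rw [mem_ball_zero_iff, abs_mobius]
  exact pseudo_lt_one hz ha

lemma mobius_inv {a z : ℂ} (ha : a ∈ ball (0:ℂ) 1) (hz : z ∈ ball (0:ℂ) 1) :
    mobius (-a) (mobius a z) = z := by
  have hd : (1 : ℂ) - (starRingEnd ℂ) a * z ≠ 0 := mobius_denom_ne ha hz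
  have hna : (1 : ℂ) - (starRingEnd ℂ) a * a ≠ 0 := mobius_denom_ne ha ha
  unfold mobius
  rw [map_neg]
  have h2 : (1 : ℂ) - -(starRingEnd ℂ) a * ((z - a) / (1 - (starRingEnd ℂ) a * z))
      = (1 - (starRingEnd ℂ) a * a) / (1 - (starRingEnd ℂ) a * z) := by
    field_simp
    ring
  have h3 : (z - a) / (1 - (starRingEnd ℂ) a * z) - -a
      = (z * (1 - (starRingEnd ℂ) a * a)) / (1 - (starRingEnd ℂ) a * z) := by
    rw [eq_div_iff hd, sub_mul, div_mul_cancel₀ _ hd]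
    ring
  rw [h2, h3, div_div_div_cancel_right₀, mul_div_assoc, div_self hna, mul_one]
  exact hd

lemma mobius_self {a : ℂ} : mobius a a = 0 := by simp [mobius]

lemma mobius_neg_zero (a : ℂ) : mobius (-a) 0 = a := by simp [mobius]

/-- Schwarz–Pick lemma. -/
lemma schwarz_pick {f : ℂ → ℂ} (hd : DifferentiableOn ℂ f (ball (0:ℂ) 1))
    (hm : MapsTo f (ball (0:ℂ) 1) (ball (0:ℂ) 1)) {z w : ℂ}
    (hz : z ∈ ball (0:ℂ) 1) (hw : w ∈ ball (0:ℂ) 1) :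
    pseudoDist (f z) (f w) ≤ pseudoDist z w := by
  have hnw : -w ∈ ball (0:ℂ) 1 := by simpa using hw
  have hfw : f w ∈ ball (0:ℂ) 1 := hm hw
  set g : ℂ → ℂ := fun ζ => mobius (f w) (f (mobius (-w) ζ)) with hg
  have hgd : DifferentiableOn ℂ g (ball (0:ℂ) 1) :=
    ((mobius_diffOn hfw).comp (hd.comp (mobius_diffOn hnw) (mobius_mapsTo hnw))
      ((hm.comp (mobius_mapsTo hnw))))
  have hgm : MapsTo g (ball (0:ℂ) 1) (ball (0:ℂ) 1) :=
    (mobius_mapsTo hfw).comp (hm.comp (mobius_mapsTo hnw))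
  have hg0 : g 0 = 0 := by
    simp only [hg, mobius_neg_zero, mobius_self]
  have hmz : mobius w z ∈ ball (0:ℂ) 1 := mobius_mapsTo hw hz
  have habs : ‖mobius w z‖ < 1 := by
    simpa using mem_ball_zero_iff.1 hmz
  have key := Complex.norm_le_norm_of_mapsTo_ball hgd (hgm.mono_right ball_subset_closedBall) hg0 habs
  have hval : g (mobius w z) = mobius (f w) (f z) := by
    simp only [hg, mobius_inv hw hz]
  rw [hval, abs_mobius, abs_mobius] at key
  exact key

lemma ratio_le {a b : ℂ} (ha : a ∈ ball (0:ℂ) 1) (hb : b ∈ ball (0:ℂ) 1) :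
    (1 - ‖a‖ ^ 2) / (1 - ‖b‖ ^ 2)
      ≤ (1 + pseudoDist a b) / (1 - pseudoDist a b) := by
  set ρ := pseudoDist a b with hρ
  set D := ‖1 - (starRingEnd ℂ) b * a‖ with hD
  set N := ‖a - b‖ with hN
  have hDpos : 0 < D := denom_pos ha hb
  have hNρ : N = ρ * D := by rw [hρ, pseudoDist, ← hD, ← hN]; field_simp
  have hρ0 : 0 ≤ ρ := pseudo_nonneg a b
  have hρ1 : ρ < 1 := pseudo_lt_one ha hb
  have hA : 0 < 1 - ‖a‖ ^ 2 := by
    have := normSq_lt_one ha; rw [Complex.sq_norm]; linarith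
  have hB : 0 < 1 - ‖b‖ ^ 2 := by
    have := normSq_lt_one hb; rw [Complex.sq_norm]; linarith
  -- identity : A * B = D^2 * (1 - ρ^2)
  have hid : (1 - ‖a‖ ^ 2) * (1 - ‖b‖ ^ 2) = D ^ 2 * (1 - ρ ^ 2) := by
    have h1 := normSq_identity a b
    have h2 : D ^ 2 = Complex.normSq (1 - (starRingEnd ℂ) b * a) := by
      rw [hD, Complex.sq_norm]
    have h3 : N ^ 2 = Complex.normSq (a - b) := by rw [hN, Complex.sq_norm]
    have h1' : D ^ 2 - N ^ 2 = (1 - Complex.normSq a) * (1 - Complex.normSq b) := by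
      rw [h2, h3]; exact h1
    rw [Complex.sq_norm, Complex.sq_norm]
    linear_combination -h1' - (N + ρ * D) * hNρ
  -- (1 - ρ) * D ≤ 1 - |b|^2
  have hkey : (1 - ρ) * D ≤ 1 - ‖b‖ ^ 2 := by
    have h4 : ‖(1 : ℂ) - (starRingEnd ℂ) b * a‖
        ≤ ‖(1 : ℂ) - (starRingEnd ℂ) b * b‖ + ‖(starRingEnd ℂ) b * (b - a)‖ := by
      have : (1 : ℂ) - (starRingEnd ℂ) b * a
          = (1 - (starRingEnd ℂ) b * b) + (starRingEnd ℂ) b * (b - a) := by ring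
      rw [this]
      exact norm_add_le _ _
    have h5 : ‖(1 : ℂ) - (starRingEnd ℂ) b * b‖ = 1 - ‖b‖ ^ 2 := by
      have e : (1 : ℂ) - (starRingEnd ℂ) b * b = ((1 - ‖b‖ ^ 2 : ℝ) : ℂ) := by
        rw [mul_comm, Complex.mul_conj, ← Complex.sq_norm]
        push_cast
        ring
      rw [e, Complex.norm_real, Real.norm_eq_abs, _root_.abs_of_nonneg hB.le]
    have h6 : ‖(starRingEnd ℂ) b * (b - a)‖ ≤ N := by
      rw [norm_mul]
      have hb1 : ‖(starRingEnd ℂ) b‖ ≤ 1 := by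
        rw [Complex.norm_conj]
        have := normSq_lt_one hb
        nlinarith [Complex.sq_norm b, norm_nonneg b]
      calc ‖(starRingEnd ℂ) b‖ * ‖b - a‖
          ≤ 1 * ‖b - a‖ := by
            apply mul_le_mul_of_nonneg_right hb1 (norm_nonneg _)
        _ = N := by rw [one_mul, hN]; exact norm_sub_rev b a
    have := h4.trans (by linarith [h6] : ‖(1 : ℂ) - (starRingEnd ℂ) b * b‖
        + ‖(starRingEnd ℂ) b * (b - a)‖ ≤ (1 - ‖b‖ ^ 2) + N)
    rw [← hD] at this
    nlinarith [hNρ]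
  rw [div_le_div_iff₀ hB (by linarith : (0:ℝ) < 1 - ρ)]
  nlinarith [mul_self_le_mul_self (mul_nonneg (by linarith) hDpos.le) hkey, hB]

lemma abs_log_ratio_le {a b : ℂ} (ha : a ∈ ball (0:ℂ) 1) (hb : b ∈ ball (0:ℂ) 1) :
    |Real.log (1 - ‖a‖ ^ 2) - Real.log (1 - ‖b‖ ^ 2)| ≤ hypDist a b := by
  have hA : 0 < 1 - ‖a‖ ^ 2 := by
    have := normSq_lt_one ha; rw [Complex.sq_norm]; linarith
  have hB : 0 < 1 - ‖b‖ ^ 2 := by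
    have := normSq_lt_one hb; rw [Complex.sq_norm]; linarith
  have hρ1 : pseudoDist a b < 1 := pseudo_lt_one ha hb
  rw [abs_le]
  constructor
  · have h0 := ratio_le hb ha
    rw [pseudo_symm b a] at h0
    have h1 : Real.log ((1 - ‖b‖ ^ 2) / (1 - ‖a‖ ^ 2))
        ≤ hypDist a b := by
      unfold hypDist
      exact Real.log_le_log (div_pos hB hA) h0
    rw [Real.log_div hB.ne' hA.ne'] at h1
    linarith
  · have h1 : Real.log ((1 - ‖a‖ ^ 2) / (1 - ‖b‖ ^ 2))
        ≤ hypDist a b := by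
      unfold hypDist
      exact Real.log_le_log (div_pos hA hB) (ratio_le ha hb)
    rw [Real.log_div hA.ne' hB.ne'] at h1
    linarith

lemma hypDist_mono {s t : ℝ} (hs : 0 ≤ s) (hst : s ≤ t) (ht : t < 1) :
    Real.log ((1 + s) / (1 - s)) ≤ Real.log ((1 + t) / (1 - t)) := by
  apply Real.log_le_log (div_pos (by linarith) (by linarith))
  rw [div_le_div_iff₀ (by linarith) (by linarith)]
  nlinarith

end GHyp

/-- There is a universal constant `C` such that `G(f)` is `C`-Lipschitz with respect to the
hyperbolic distance, for every holomorphic self-map `f` of the disc, where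
`G(f)(z) = log((1-|f z|²)/(1-|z|²))`. -/
theorem G_hyperbolic_lipschitz :
    ∃ C : ℝ, 0 < C ∧
      ∀ f : ℂ → ℂ, DifferentiableOn ℂ f (ball (0:ℂ) 1) →
        (∀ z ∈ ball (0:ℂ) 1, f z ∈ ball (0:ℂ) 1) →
        ∀ z ∈ ball (0:ℂ) 1, ∀ w ∈ ball (0:ℂ) 1,
          |Real.log ((1 - ‖f z‖ ^ 2) / (1 - ‖z‖ ^ 2)) -
            Real.log ((1 - ‖f w‖ ^ 2) / (1 - ‖w‖ ^ 2))|
            ≤ C * hypDist z w := by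
  refine ⟨2, by norm_num, fun f hd hm z hz w hw => ?_⟩
  have hfz := hm z hz
  have hfw := hm w hw
  have hAz : 0 < 1 - ‖f z‖ ^ 2 := by
    have := GHyp.normSq_lt_one hfz; rw [Complex.sq_norm]; linarith
  have hAw : 0 < 1 - ‖f w‖ ^ 2 := by
    have := GHyp.normSq_lt_one hfw; rw [Complex.sq_norm]; linarith
  have hBz : 0 < 1 - ‖z‖ ^ 2 := by
    have := GHyp.normSq_lt_one hz; rw [Complex.sq_norm]; linarith
  have hBw : 0 < 1 - ‖w‖ ^ 2 := by
    have := GHyp.normSq_lt_one hw; rw [Complex.sq_norm]; linarith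
  rw [Real.log_div hAz.ne' hBz.ne', Real.log_div hAw.ne' hBw.ne']
  have h1 := GHyp.abs_log_ratio_le hfz hfw
  have h2 := GHyp.abs_log_ratio_le hz hw
  -- hypDist (f z) (f w) ≤ hypDist z w via Schwarz-Pick and monotonicity
  have h3 : hypDist (f z) (f w) ≤ hypDist z w := by
    unfold hypDist
    exact GHyp.hypDist_mono (GHyp.pseudo_nonneg _ _)
      (GHyp.schwarz_pick hd (fun x hx => hm x hx) hz hw)
      (GHyp.pseudo_lt_one hz hw)
  calc |Real.log (1 - ‖f z‖ ^ 2) - Real.log (1 - ‖z‖ ^ 2) -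
        (Real.log (1 - ‖f w‖ ^ 2) - Real.log (1 - ‖w‖ ^ 2))|
      ≤ |Real.log (1 - ‖f z‖ ^ 2) - Real.log (1 - ‖f w‖ ^ 2)| +
        |Real.log (1 - ‖z‖ ^ 2) - Real.log (1 - ‖w‖ ^ 2)| := by
          have e : Real.log (1 - ‖f z‖ ^ 2) - Real.log (1 - ‖z‖ ^ 2) -
              (Real.log (1 - ‖f w‖ ^ 2) - Real.log (1 - ‖w‖ ^ 2))
            = (Real.log (1 - ‖f z‖ ^ 2) - Real.log (1 - ‖f w‖ ^ 2)) -
              (Real.log (1 - ‖z‖ ^ 2) - Real.log (1 - ‖w‖ ^ 2)) := by ring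
          rw [e]
          exact abs_sub _ _
    _ ≤ hypDist (f z) (f w) + hypDist z w := add_le_add h1 h2
    _ ≤ 2 * hypDist z w := by linarith
end

section
/- For any holomorphic map f : 𝔻 → 𝔻 and any z with 1/2 < |z| < 1, one has |log|z|| · |∇G(f)(z)| ≤ 4, where G(f)(z) = log((1-|f(z)|^2)/(1-|z|^2)) and ∇ denotes the real gradient. -/
open Complex MeasureTheory Metric Set Filter
open scoped Topology

lemma one_add_ne {a w : ℂ} (ha : ‖a‖ < 1) (hw : ‖w‖ < 1) :
    1 + (starRingEnd ℂ) a * w ≠ 0 := by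
  intro h
  have h1 : ‖(starRingEnd ℂ) a * w‖ < 1 := by
    rw [norm_mul, Complex.norm_conj]
    nlinarith [norm_nonneg a, norm_nonneg w]
  have : (starRingEnd ℂ) a * w = -1 := by linear_combination h
  rw [this] at h1
  simp at h1

lemma mobius_lt_one {a w : ℂ} (ha : ‖a‖ < 1) (hw : ‖w‖ < 1) :
    ‖(w + a) / (1 + (starRingEnd ℂ) a * w)‖ < 1 := by
  have hne := one_add_ne ha hw
  rw [norm_div, div_lt_one (by simpa [norm_pos_iff] using hne)]
  have key : (normSq (1 + (starRingEnd ℂ) a * w) : ℝ) - normSq (w + a)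
      = (1 - normSq a) * (1 - normSq w) := by
    have hc : (1 + (starRingEnd ℂ) a * w) * (starRingEnd ℂ) (1 + (starRingEnd ℂ) a * w)
        - (w + a) * (starRingEnd ℂ) (w + a)
        = (1 - a * (starRingEnd ℂ) a) * (1 - w * (starRingEnd ℂ) w) := by
      simp only [map_add, map_mul, map_one, Complex.conj_conj]
      ring
    rw [Complex.mul_conj, Complex.mul_conj, Complex.mul_conj, Complex.mul_conj] at hc
    exact_mod_cast hc
  have ha2 : normSq a < 1 := by rw [← Complex.sq_norm]; nlinarith [norm_nonneg a]
  have hw2 : normSq w < 1 := by rw [← Complex.sq_norm]; nlinarith [norm_nonneg w]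
  have : normSq (w + a) < normSq (1 + (starRingEnd ℂ) a * w) := by nlinarith
  rw [Complex.norm_def, Complex.norm_def]
  exact Real.sqrt_lt_sqrt (normSq_nonneg _) this

lemma schwarz_pick {f : ℂ → ℂ} (hf : DifferentiableOn ℂ f (ball (0:ℂ) 1))
    (hmap : MapsTo f (ball (0:ℂ) 1) (ball (0:ℂ) 1)) {z : ℂ} (hz : z ∈ ball (0:ℂ) 1) :
    ‖deriv f z‖ * (1 - ‖z‖ ^ 2) ≤ 1 - ‖f z‖ ^ 2 := by
  have ha : ‖z‖ < 1 := by simpa [mem_ball, dist_zero_right] using hz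
  have hb : ‖f z‖ < 1 := by
    simpa [mem_ball, dist_zero_right] using hmap hz
  set a := z with ha_def
  set b := f z with hb_def
  set φ : ℂ → ℂ := fun w => (w + a) / (1 + (starRingEnd ℂ) a * w) with hφ_def
  set ψ : ℂ → ℂ := fun w => (w + (-b)) / (1 + (starRingEnd ℂ) (-b) * w) with hψ_def
  have hφmaps : MapsTo φ (ball (0:ℂ) 1) (ball (0:ℂ) 1) := fun w hw => by
    rw [mem_ball_zero_iff] at hw ⊢
    exact mobius_lt_one ha hw
  have hbneg : ‖-b‖ < 1 := by simpa using hb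
  have hψmaps : MapsTo ψ (ball (0:ℂ) 1) (ball (0:ℂ) 1) := fun w hw => by
    rw [mem_ball_zero_iff] at hw ⊢
    exact mobius_lt_one hbneg hw
  have hφdiff : DifferentiableOn ℂ φ (ball (0:ℂ) 1) := by
    apply DifferentiableOn.div
    · fun_prop
    · fun_prop
    · intro w hw
      exact one_add_ne ha (by simpa [mem_ball, dist_zero_right] using hw)
  have hψdiff : DifferentiableOn ℂ ψ (ball (0:ℂ) 1) := by
    apply DifferentiableOn.div
    · fun_prop
    · fun_prop
    · intro w hw
      exact one_add_ne hbneg (by simpa [mem_ball, dist_zero_right] using hw)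
  set g : ℂ → ℂ := fun w => ψ (f (φ w)) with hg_def
  have hgdiff : DifferentiableOn ℂ g (ball (0:ℂ) 1) :=
    (hψdiff.comp (hf.comp hφdiff hφmaps) ((hmap.comp hφmaps))).congr (fun x _ => rfl)
  have hgmaps : MapsTo g (ball (0:ℂ) 1) (ball (0:ℂ) 1) :=
    fun w hw => hψmaps (hmap (hφmaps hw))
  have hφ0 : φ 0 = a := by simp [hφ_def]
  have hb0 : 1 + (starRingEnd ℂ) (-b) * b ≠ 0 := one_add_ne hbneg hb
  have hg0 : g 0 = 0 := by simp [hg_def, hφ0, hψ_def, ← hb_def]; left; rw [ha_def, hb_def]; simp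
  have hden : (1 : ℂ) + (starRingEnd ℂ) a * 0 ≠ 0 := by simp
  have hφder : HasDerivAt φ ((1 - a * (starRingEnd ℂ) a)) 0 := by
    have h1 : HasDerivAt (fun w : ℂ => w + a) 1 0 := (hasDerivAt_id 0).add_const a
    have h2 : HasDerivAt (fun w : ℂ => 1 + (starRingEnd ℂ) a * w) ((starRingEnd ℂ) a) 0 := by
      simpa using ((hasDerivAt_id 0).const_mul ((starRingEnd ℂ) a)).const_add 1
    have := h1.div h2 hden
    refine (this : HasDerivAt φ _ 0).congr_deriv ?_
    field_simp
    ring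
  have hfd : HasDerivAt f (deriv f a) a :=
    (hf.differentiableAt (isOpen_ball.mem_nhds hz)).hasDerivAt
  have hbden : (1 : ℂ) + (starRingEnd ℂ) (-b) * b ≠ 0 := hb0
  have hψder : HasDerivAt ψ ((1 - b * (starRingEnd ℂ) b) / (1 - (starRingEnd ℂ) b * b)^2) b := by
    have h1 : HasDerivAt (fun w : ℂ => w + (-b)) 1 b := (hasDerivAt_id b).add_const (-b)
    have h2 : HasDerivAt (fun w : ℂ => 1 + (starRingEnd ℂ) (-b) * w) ((starRingEnd ℂ) (-b)) b := by
      simpa using ((hasDerivAt_id b).const_mul ((starRingEnd ℂ) (-b))).const_add 1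
    have := h1.div h2 hbden
    refine (this : HasDerivAt ψ _ b).congr_deriv ?_
    simp only [map_neg]
    ring_nf
  have hgder : HasDerivAt g
      ((1 - b * (starRingEnd ℂ) b) / (1 - (starRingEnd ℂ) b * b)^2 * (deriv f a) *
        (1 - a * (starRingEnd ℂ) a)) 0 := by
    have h1 : HasDerivAt (fun w => f (φ w)) (deriv f a * (1 - a * (starRingEnd ℂ) a)) 0 := by
      have := HasDerivAt.comp (0:ℂ) (by rwa [hφ0]) hφder
      exact this
    have h2 : HasDerivAt g
        ((1 - b * (starRingEnd ℂ) b) / (1 - (starRingEnd ℂ) b * b)^2 *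
          (deriv f a * (1 - a * (starRingEnd ℂ) a))) 0 := by
      have hfφ0 : f (φ 0) = b := by rw [hφ0]
      exact HasDerivAt.comp (0:ℂ) (by rwa [hfφ0]) h1
    convert h2 using 1
    ring
  have hsch := Complex.norm_deriv_le_one_of_mapsTo_ball hgdiff (by rw [hg0]; exact hgmaps.mono_right ball_subset_closedBall) one_pos
  rw [hgder.deriv] at hsch
  have hna : ‖1 - a * (starRingEnd ℂ) a‖ = 1 - ‖a‖ ^ 2 := by
    rw [Complex.mul_conj]
    rw [show (1 : ℂ) - (normSq a : ℂ) = ((1 - normSq a : ℝ) : ℂ) by push_cast; ring]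
    rw [Complex.norm_real, Real.norm_eq_abs, abs_of_pos (by rw [← Complex.sq_norm]; nlinarith [norm_nonneg a]),
      Complex.sq_norm]
  have hnb : ‖1 - b * (starRingEnd ℂ) b‖ = 1 - ‖b‖ ^ 2 := by
    rw [Complex.mul_conj]
    rw [show (1 : ℂ) - (normSq b : ℂ) = ((1 - normSq b : ℝ) : ℂ) by push_cast; ring]
    rw [Complex.norm_real, Real.norm_eq_abs, abs_of_pos (by rw [← Complex.sq_norm]; nlinarith [norm_nonneg b]),
      Complex.sq_norm]
  have hnb' : ‖1 - (starRingEnd ℂ) b * b‖ = 1 - ‖b‖ ^ 2 := by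
    rw [mul_comm ((starRingEnd ℂ) b) b]; exact hnb
  rw [norm_mul, norm_mul, norm_div, norm_pow, hna, hnb, hnb'] at hsch
  have hbpos : 0 < 1 - ‖b‖ ^ 2 := by nlinarith [norm_nonneg b]
  have hapos : 0 < 1 - ‖a‖ ^ 2 := by nlinarith [norm_nonneg a]
  have hre : (1 - ‖b‖ ^ 2) / (1 - ‖b‖ ^ 2) ^ 2 * ‖deriv f a‖ *
      (1 - ‖a‖ ^ 2) = ‖deriv f a‖ * (1 - ‖a‖ ^ 2) /
      (1 - ‖b‖ ^ 2) := by
    field_simp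
  rw [hre] at hsch
  exact (div_le_one hbpos).mp hsch

lemma log_fderiv_bound {g : ℂ → ℂ} {z d : ℂ} (hg : HasDerivAt g d z)
    (h1 : ‖g z‖ < 1) :
    ∃ L : ℂ →L[ℝ] ℝ, HasFDerivAt (fun w => Real.log (1 - ‖g w‖ ^ 2)) L z ∧
      ‖L‖ ≤ 2 * ‖g z‖ * ‖d‖ / (1 - ‖g z‖ ^ 2) := by
  have hD : HasFDerivAt g ((ContinuousLinearMap.smulRight (1 : ℂ →L[ℂ] ℂ) d).restrictScalars ℝ) z :=
    (hasDerivAt_iff_hasFDerivAt.mp hg).restrictScalars ℝ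
  set D := (ContinuousLinearMap.smulRight (1 : ℂ →L[ℂ] ℂ) d).restrictScalars ℝ with hD_def
  have hDv : ∀ v : ℂ, D v = v * d := fun v => by
    simp [hD_def, smul_eq_mul]
  have hre : HasFDerivAt (fun w => (g w).re) (Complex.reCLM.comp D) z :=
    (Complex.reCLM.hasFDerivAt).comp z hD
  have him : HasFDerivAt (fun w => (g w).im) (Complex.imCLM.comp D) z :=
    (Complex.imCLM.hasFDerivAt).comp z hD
  set A : ℂ →L[ℝ] ℝ := ((g z).re • (Complex.reCLM.comp D) + (g z).re • (Complex.reCLM.comp D)) +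
      ((g z).im • (Complex.imCLM.comp D) + (g z).im • (Complex.imCLM.comp D)) with hA_def
  have hsq : HasFDerivAt (fun w => (g w).re * (g w).re + (g w).im * (g w).im) A z :=
    (hre.mul hre).add (him.mul him)
  have hfun : (fun w => Real.log (1 - ‖g w‖ ^ 2)) =
      fun w => Real.log (1 - ((g w).re * (g w).re + (g w).im * (g w).im)) := by
    funext w
    rw [Complex.sq_norm, Complex.normSq_apply]
  have hpos : 0 < 1 - ‖g z‖ ^ 2 := by nlinarith [norm_nonneg (g z)]
  have hval : 1 - ((g z).re * (g z).re + (g z).im * (g z).im) = 1 - ‖g z‖ ^ 2 := by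
    rw [Complex.sq_norm, Complex.normSq_apply]
  have hne : 1 - ((g z).re * (g z).re + (g z).im * (g z).im) ≠ 0 := by rw [hval]; exact hpos.ne'
  have hlog := (hsq.const_sub 1).log hne
  rw [← hfun, hval] at hlog
  refine ⟨_, hlog, ?_⟩
  apply ContinuousLinearMap.opNorm_le_bound
  · positivity
  intro v
  have hAv : A v = 2 * ((starRingEnd ℂ) (g z) * (v * d)).re := by
    simp only [hA_def, ContinuousLinearMap.add_apply, ContinuousLinearMap.smul_apply,
      ContinuousLinearMap.coe_comp', Function.comp_apply, Complex.reCLM_apply,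
      Complex.imCLM_apply, smul_eq_mul, hDv, Complex.mul_re, Complex.conj_re, Complex.conj_im]
    ring
  have habs : |A v| ≤ 2 * ‖g z‖ * ‖d‖ * ‖v‖ := by
    rw [hAv, abs_mul, _root_.abs_two]
    have h := Complex.abs_re_le_norm ((starRingEnd ℂ) (g z) * (v * d))
    rw [norm_mul, norm_mul, Complex.norm_conj] at h
    calc 2 * |((starRingEnd ℂ) (g z) * (v * d)).re| ≤
        2 * (‖g z‖ * (‖v‖ * ‖d‖)) := by linarith
      _ = 2 * ‖g z‖ * ‖d‖ * ‖v‖ := by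
        ring
  have hnorm : ‖((1 - ‖g z‖ ^ 2)⁻¹ • -A) v‖ =
      (1 - ‖g z‖ ^ 2)⁻¹ * |A v| := by
    rw [ContinuousLinearMap.smul_apply, ContinuousLinearMap.neg_apply, norm_smul,
      Real.norm_eq_abs, Real.norm_eq_abs, abs_neg, abs_of_pos (inv_pos.mpr hpos)]
  rw [hnorm, div_eq_inv_mul, mul_assoc]
  exact mul_le_mul_of_nonneg_left habs (inv_pos.mpr hpos).le

/-- For a holomorphic self-map `f` of the unit disc and `1/2 < |z| < 1`, the gradient of
`G(f)(z) = log((1-|f z|²)/(1-|z|²))` satisfies `|log|z|| ⬝ |∇G(f)(z)| ≤ 4`. -/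
theorem gradient_G_estimate
    (f : ℂ → ℂ) (hf : DifferentiableOn ℂ f (ball (0:ℂ) 1))
    (hmap : ∀ z ∈ ball (0:ℂ) 1, f z ∈ ball (0:ℂ) 1) :
    ∀ z : ℂ, 1/2 < ‖z‖ → ‖z‖ < 1 →
      |Real.log (‖z‖)| *
        ‖fderiv ℝ (fun w => Real.log ((1 - ‖f w‖ ^ 2) / (1 - ‖w‖ ^ 2))) z‖
        ≤ 4 := by
  intro z h1 h2
  have hz : z ∈ ball (0:ℂ) 1 := mem_ball_zero_iff.mpr h2
  have hfz : ‖f z‖ < 1 := mem_ball_zero_iff.mp (hmap z hz)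
  have hfd : HasDerivAt f (deriv f z) z :=
    (hf.differentiableAt (isOpen_ball.mem_nhds hz)).hasDerivAt
  obtain ⟨L1, hL1, hL1n⟩ := log_fderiv_bound hfd hfz
  obtain ⟨L2, hL2, hL2n⟩ := log_fderiv_bound (hasDerivAt_id' (x := z)) h2
  have hdiff : HasFDerivAt
      (fun w => Real.log (1 - ‖f w‖ ^ 2) - Real.log (1 - ‖w‖ ^ 2))
      (L1 - L2) z := hL1.sub hL2
  have heq : (fun w => Real.log ((1 - ‖f w‖ ^ 2) / (1 - ‖w‖ ^ 2))) =ᶠ[𝓝 z]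
      (fun w => Real.log (1 - ‖f w‖ ^ 2) - Real.log (1 - ‖w‖ ^ 2)) := by
    filter_upwards [isOpen_ball.mem_nhds hz] with w hw
    have hw1 : ‖w‖ < 1 := mem_ball_zero_iff.mp hw
    have hw2 : ‖f w‖ < 1 := mem_ball_zero_iff.mp (hmap w hw)
    have p1 : (0:ℝ) < 1 - ‖f w‖ ^ 2 := by nlinarith [norm_nonneg (f w)]
    have p2 : (0:ℝ) < 1 - ‖w‖ ^ 2 := by nlinarith [norm_nonneg w]
    rw [Real.log_div p1.ne' p2.ne']
  have hF : HasFDerivAt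
      (fun w => Real.log ((1 - ‖f w‖ ^ 2) / (1 - ‖w‖ ^ 2)))
      (L1 - L2) z := hdiff.congr_of_eventuallyEq heq
  rw [hF.fderiv]
  set t := ‖z‖ with ht_def
  have ht0 : 0 < t := lt_trans (by norm_num) h1
  have hApos : (0:ℝ) < 1 - t ^ 2 := by nlinarith
  have hBpos : (0:ℝ) < 1 - ‖f z‖ ^ 2 := by nlinarith [norm_nonneg (f z)]
  have hsp : ‖deriv f z‖ * (1 - t ^ 2) ≤ 1 - ‖f z‖ ^ 2 :=
    schwarz_pick hf (fun w hw => hmap w hw) hz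
  -- bound ‖L1‖ ≤ 2 / (1 - t^2)
  have hL1' : ‖L1‖ ≤ 2 / (1 - t ^ 2) := by
    refine hL1n.trans ?_
    rw [div_le_div_iff₀ hBpos hApos]
    have hfz1 : ‖f z‖ ≤ 1 := hfz.le
    nlinarith [norm_nonneg (deriv f z), norm_nonneg (f z),
      mul_le_mul_of_nonneg_left hsp (mul_nonneg (by norm_num : (0:ℝ) ≤ 2)
        (norm_nonneg (f z)))]
  have hL2' : ‖L2‖ ≤ 2 * t / (1 - t ^ 2) := by
    refine hL2n.trans ?_
    simp
  have hsum : ‖L1 - L2‖ ≤ 2 / (1 - t) := by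
    have h3 : ‖L1 - L2‖ ≤ ‖L1‖ + ‖L2‖ := norm_sub_le _ _
    have h4 : 2 / (1 - t ^ 2) + 2 * t / (1 - t ^ 2) = 2 / (1 - t) := by
      have h5 : 1 - t ^ 2 = (1 - t) * (1 + t) := by ring
      rw [h5]
      have h6 : (0:ℝ) < 1 - t := by nlinarith
      have h7 : (0:ℝ) < 1 + t := by nlinarith
      field_simp
    linarith
  have hlogb : |Real.log t| ≤ 2 * (1 - t) := by
    have hneg : Real.log t < 0 := Real.log_neg ht0 h2
    rw [abs_of_neg hneg]
    have := Real.log_le_sub_one_of_pos (inv_pos.mpr ht0)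
    rw [Real.log_inv] at this
    have h8 : t⁻¹ - 1 ≤ 2 * (1 - t) := by
      rw [inv_eq_one_div, div_sub' ht0.ne']
      rw [div_le_iff₀ ht0]
      nlinarith
    linarith
  calc |Real.log t| * ‖L1 - L2‖ ≤ (2 * (1 - t)) * (2 / (1 - t)) := by
        apply mul_le_mul hlogb hsum (norm_nonneg _)
        nlinarith
    _ = 4 := by
        have h6 : (0:ℝ) < 1 - t := by nlinarith
        field_simp
        ring
end

section
/- Let f : 𝔻 → 𝔻 be holomorphic with f(0) = 0, and let ξ be a point on the unit circle at which f has a finite angular derivative |f'(ξ)| (i.e., the limit of (1-|f(rξ)|)/(1-r) as r → 1 exists finitely). Then the accumulated Möbius distortion A(f)(ξ) = ∫₀¹ (1 - D_h f(rξ)) · 2/(1-r²) dr satisfies A(f)(ξ) ≤ log|f'(ξ)|. -/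
open Complex MeasureTheory Metric Set Filter

/-- `f` has (finite) angular derivative `L` at the boundary point `ξ`:
`(1-|f(rξ)|)/(1-r) → L` as `r → 1⁻`. -/
def HasAngularDeriv (f : ℂ → ℂ) (ξ : ℂ) (L : ℝ) : Prop :=
  Tendsto (fun r : ℝ => (1 - ‖f ((r:ℂ) * ξ)‖) / (1 - r))
    (nhdsWithin 1 (Iio 1)) (nhds L)

noncomputable def myT (x : ℝ) : ℝ := 1 - 2 / (Real.exp (2*x) + 1)

lemma expP (x : ℝ) : 0 < Real.exp (2*x) + 1 := by positivity

lemma myT_zero : myT 0 = 0 := by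
  simp [myT, Real.exp_zero]; norm_num

lemma myT_lt_one (x : ℝ) : myT x < 1 := by
  have h := expP x
  have : 0 < 2 / (Real.exp (2*x) + 1) := by positivity
  unfold myT; linarith

lemma hasDerivAt_myT (x : ℝ) : HasDerivAt myT (1 - myT x ^ 2) x := by
  have h := expP x
  have h1 : HasDerivAt (fun x : ℝ => Real.exp (2*x) + 1) (2 * Real.exp (2*x)) x := by
    have := ((Real.hasDerivAt_exp (2*x)).comp x (((hasDerivAt_id x).const_mul (2:ℝ)))).add_const 1
    simpa [mul_comm] using this
  have h2 := (hasDerivAt_const x (2:ℝ)).div h1 h.ne'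
  have h3 := (hasDerivAt_const x (1:ℝ)).sub h2
  refine h3.congr_deriv ?_
  unfold myT
  field_simp
  ring

lemma continuous_myT : Continuous myT := by
  have : ∀ x, ContinuousAt myT x := fun x => (hasDerivAt_myT x).continuousAt
  exact continuous_iff_continuousAt.2 this

lemma log_ratio_le {a x : ℝ} (h0 : 0 ≤ a) (h1 : a ≤ myT x) :
    Real.log ((1+a)/(1-a)) ≤ 2*x := by
  have hT := myT_lt_one x
  have ha1 : a < 1 := lt_of_le_of_lt h1 hT
  have hE := expP x
  have hTeq : myT x = (Real.exp (2*x) - 1)/(Real.exp (2*x)+1) := by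
    unfold myT; field_simp; ring
  have h2 : a * (Real.exp (2*x) + 1) ≤ Real.exp (2*x) - 1 := by
    rw [hTeq, le_div_iff₀ hE] at h1; exact h1
  have key : (1+a)/(1-a) ≤ Real.exp (2*x) := by
    rw [div_le_iff₀ (by linarith)]
    nlinarith
  calc Real.log ((1+a)/(1-a)) ≤ Real.log (Real.exp (2*x)) :=
        Real.log_le_log (div_pos (by linarith) (by linarith)) key
    _ = 2*x := Real.log_exp _

lemma mobius_normSq {a z : ℂ} :
    Complex.normSq (1 - (starRingEnd ℂ) a * z) =
      Complex.normSq (z - a) + (1 - Complex.normSq a) * (1 - Complex.normSq z) := by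
  simp only [Complex.normSq_apply, Complex.sub_re, Complex.sub_im, Complex.mul_re,
    Complex.mul_im, Complex.one_re, Complex.one_im, Complex.conj_re, Complex.conj_im]
  ring

lemma mobius_den_ne {a z : ℂ} (ha : ‖a‖ < 1) (hz : ‖z‖ < 1) :
    (1 - (starRingEnd ℂ) a * z) ≠ 0 := by
  have h1 : Complex.normSq a < 1 := by
    rw [← Complex.sq_norm] at *; nlinarith [norm_nonneg a]
  have h2 : Complex.normSq z < 1 := by
    rw [← Complex.sq_norm] at *; nlinarith [norm_nonneg z]
  have := mobius_normSq (a := a) (z := z)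
  have hpos : 0 < Complex.normSq (1 - (starRingEnd ℂ) a * z) := by
    rw [this]
    have := Complex.normSq_nonneg (z - a)
    nlinarith
  intro h
  rw [h] at hpos; simp at hpos

lemma mobius_abs_lt {a z : ℂ} (ha : ‖a‖ < 1) (hz : ‖z‖ < 1) :
    ‖(z - a) / (1 - (starRingEnd ℂ) a * z)‖ < 1 := by
  have h1 : Complex.normSq a < 1 := by
    rw [← Complex.sq_norm] at *; nlinarith [norm_nonneg a]
  have h2 : Complex.normSq z < 1 := by
    rw [← Complex.sq_norm] at *; nlinarith [norm_nonneg z]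
  have hne := mobius_den_ne ha hz
  have hlt : Complex.normSq (z - a) < Complex.normSq (1 - (starRingEnd ℂ) a * z) := by
    rw [mobius_normSq]; nlinarith
  rw [norm_div, div_lt_one (by
    have := Complex.normSq_pos.2 hne
    have : 0 < ‖1 - (starRingEnd ℂ) a * z‖ := norm_pos_iff.2 hne
    exact this)]
  have := Complex.sq_norm (z - a)
  have := Complex.sq_norm (1 - (starRingEnd ℂ) a * z)
  nlinarith [norm_nonneg (z - a), norm_nonneg (1 - (starRingEnd ℂ) a * z)]

lemma schwarzPick (f : ℂ → ℂ) (hf : DifferentiableOn ℂ f (ball (0:ℂ) 1))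
    (hmap : ∀ z ∈ ball (0:ℂ) 1, f z ∈ ball (0:ℂ) 1) {z₀ : ℂ} (hz₀ : z₀ ∈ ball (0:ℂ) 1) :
    (1 - ‖z₀‖ ^ 2) * ‖deriv f z₀‖ ≤ 1 - ‖f z₀‖ ^ 2 := by
  set a := z₀ with ha_def
  set b := f z₀ with hb_def
  have haa : ‖a‖ < 1 := mem_ball_zero_iff.1 hz₀
  have hb : ‖b‖ < 1 := mem_ball_zero_iff.1 (hmap _ hz₀)
  have haan : ‖-a‖ < 1 := by simpa using haa
  set σ : ℂ → ℂ := fun z => (z + a) / (1 + (starRingEnd ℂ) a * z) with hσ_def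
  set φ : ℂ → ℂ := fun w => (w - b) / (1 - (starRingEnd ℂ) b * w) with hφ_def
  have hσ_eq : ∀ z : ℂ, σ z = (z - (-a)) / (1 - (starRingEnd ℂ) (-a) * z) := by
    intro z; simp only [hσ_def, sub_neg_eq_add, map_neg, neg_mul, sub_neg_eq_add]
  have hσ_maps : MapsTo σ (ball (0:ℂ) 1) (ball (0:ℂ) 1) := by
    intro z hz
    rw [mem_ball_zero_iff] at hz ⊢
    rw [hσ_eq]
    exact mobius_abs_lt haan hz
  have hσ_den : ∀ z ∈ ball (0:ℂ) 1, (1 + (starRingEnd ℂ) a * z) ≠ 0 := by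
    intro z hz
    have := mobius_den_ne haan (mem_ball_zero_iff.1 hz)
    simpa [map_neg, sub_neg_eq_add] using this
  have hφ_maps : MapsTo φ (ball (0:ℂ) 1) (ball (0:ℂ) 1) := by
    intro w hw
    rw [mem_ball_zero_iff] at hw ⊢
    exact mobius_abs_lt hb hw
  have hφ_den : ∀ w ∈ ball (0:ℂ) 1, (1 - (starRingEnd ℂ) b * w) ≠ 0 := fun w hw =>
    mobius_den_ne hb (mem_ball_zero_iff.1 hw)
  have hσ_diff : DifferentiableOn ℂ σ (ball (0:ℂ) 1) := by
    apply DifferentiableOn.div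
    · exact (differentiable_id.add_const a).differentiableOn
    · exact ((differentiable_const _).add ((differentiable_id).const_mul _)).differentiableOn
    · exact hσ_den
  have hφ_diff : DifferentiableOn ℂ φ (ball (0:ℂ) 1) := by
    apply DifferentiableOn.div
    · exact (differentiable_id.sub_const b).differentiableOn
    · exact ((differentiable_const _).sub ((differentiable_id).const_mul _)).differentiableOn
    · exact hφ_den
  set ψ : ℂ → ℂ := φ ∘ f ∘ σ with hψ_def
  have hfσ_diff : DifferentiableOn ℂ (f ∘ σ) (ball (0:ℂ) 1) := hf.comp hσ_diff hσ_maps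
  have hfσ_maps : MapsTo (f ∘ σ) (ball (0:ℂ) 1) (ball (0:ℂ) 1) := fun z hz =>
    hmap _ (hσ_maps hz)
  have hψ_diff : DifferentiableOn ℂ ψ (ball (0:ℂ) 1) := hφ_diff.comp hfσ_diff hfσ_maps
  have hψ_maps : MapsTo ψ (ball (0:ℂ) 1) (ball (0:ℂ) 1) := fun z hz =>
    hφ_maps (hfσ_maps hz)
  have hσ00 : σ 0 = a := by simp [hσ_def]
  have hψ0 : ψ 0 = 0 := by
    simp only [hψ_def, Function.comp_apply, hσ00, ← hb_def, hφ_def, sub_self, zero_div]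
    rw [ha_def, ← hb_def, sub_self, zero_div]
  have schwarz : ‖deriv ψ 0‖ ≤ 1 := by
    have h := Complex.norm_deriv_le_div_of_mapsTo_ball (R₁ := 1) (R₂ := 1) hψ_diff
      (by rw [hψ0]; exact hψ_maps.mono_right ball_subset_closedBall) one_pos
    simpa using h
  -- derivatives
  have hσ_hd : HasDerivAt σ (1 - (starRingEnd ℂ) a * a) 0 := by
    have hden : (1 + (starRingEnd ℂ) a * (0:ℂ)) ≠ 0 := by simp
    have h1 : HasDerivAt (fun z : ℂ => z + a) 1 0 := (hasDerivAt_id _).add_const a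
    have h2 : HasDerivAt (fun z : ℂ => 1 + (starRingEnd ℂ) a * z) ((starRingEnd ℂ) a) 0 := by
      simpa using (((hasDerivAt_id (0:ℂ)).const_mul ((starRingEnd ℂ) a))).const_add 1
    have h3 := h1.div h2 hden
    refine h3.congr_deriv ?_
    simp only [mul_zero, add_zero, zero_add, one_mul, one_pow, div_one]
    ring
  have hf_hd : HasDerivAt f (deriv f a) a :=
    (hf.differentiableAt (isOpen_ball.mem_nhds hz₀)).hasDerivAt
  have hφden : (1 - (starRingEnd ℂ) b * b) ≠ 0 := mobius_den_ne hb hb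
  have hφ_hd : HasDerivAt φ (1 / (1 - (starRingEnd ℂ) b * b)) b := by
    have h1 : HasDerivAt (fun w : ℂ => w - b) 1 b := (hasDerivAt_id _).sub_const b
    have h2 : HasDerivAt (fun w : ℂ => 1 - (starRingEnd ℂ) b * w) (-((starRingEnd ℂ) b)) b := by
      simpa using ((hasDerivAt_id b).const_mul ((starRingEnd ℂ) b)).const_sub 1
    have h3 := h1.div h2 hφden
    refine h3.congr_deriv ?_
    beta_reduce
    rw [div_eq_div_iff (pow_ne_zero 2 hφden) hφden]
    ring
  have hfσ_hd : HasDerivAt (f ∘ σ) (deriv f a * (1 - (starRingEnd ℂ) a * a)) 0 := by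
    have h : HasDerivAt f (deriv f a) (σ 0) := hσ00 ▸ hf_hd
    exact HasDerivAt.comp 0 h hσ_hd
  have hfσ0 : (f ∘ σ) 0 = b := by simp [Function.comp_apply, hσ00, hb_def, ha_def]
  have hψ_hd : HasDerivAt ψ
      ((1 / (1 - (starRingEnd ℂ) b * b)) * (deriv f a * (1 - (starRingEnd ℂ) a * a))) 0 := by
    have h : HasDerivAt φ (1 / (1 - (starRingEnd ℂ) b * b)) ((f ∘ σ) 0) := hfσ0 ▸ hφ_hd
    exact HasDerivAt.comp 0 h hfσ_hd
  have e1 : (1 : ℂ) - (starRingEnd ℂ) b * b = ((1 - Complex.normSq b : ℝ) : ℂ) := by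
    rw [mul_comm, Complex.mul_conj]; push_cast; ring
  have e2 : (1 : ℂ) - (starRingEnd ℂ) a * a = ((1 - Complex.normSq a : ℝ) : ℂ) := by
    rw [mul_comm, Complex.mul_conj]; push_cast; ring
  have hnsa : Complex.normSq a < 1 := by
    have := Complex.sq_norm a; nlinarith [norm_nonneg a]
  have hnsb : Complex.normSq b < 1 := by
    have := Complex.sq_norm b; nlinarith [norm_nonneg b]
  have habs : ‖deriv ψ 0‖ =
      (1 - Complex.normSq a) * ‖deriv f a‖ / (1 - Complex.normSq b) := by
    rw [hψ_hd.deriv, norm_mul, norm_mul, e1, e2, norm_div, norm_one, Complex.norm_real, Real.norm_eq_abs,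
      Complex.norm_real, Real.norm_eq_abs, _root_.abs_of_nonneg (by linarith : (0:ℝ) ≤ 1 - Complex.normSq b),
      _root_.abs_of_nonneg (by linarith : (0:ℝ) ≤ 1 - Complex.normSq a)]
    ring
  rw [habs] at schwarz
  rw [div_le_one (by linarith)] at schwarz
  rw [Complex.sq_norm, Complex.sq_norm]
  linarith

/-- Pointwise estimate: for a holomorphic self-map of the disc fixing the origin, the accumulated
Möbius distortion `A(f)(ξ) = ∫₀¹ (1 - D_h f(rξ)) ⬝ 2/(1-r²) dr` is at most `log |f'(ξ)|`. -/
theorem accumulated_distortion_le_log_angular_deriv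
    (f : ℂ → ℂ) (hf : DifferentiableOn ℂ f (ball (0:ℂ) 1))
    (hmap : ∀ z ∈ ball (0:ℂ) 1, f z ∈ ball (0:ℂ) 1) (h0 : f 0 = 0)
    (ξ : ℂ) (hξ : ‖ξ‖ = 1) (L : ℝ) (hL : HasAngularDeriv f ξ L) :
    ∫⁻ r in Ioo (0:ℝ) 1,
        ENNReal.ofReal ((1 - hypDeriv f ((r:ℂ) * ξ)) * (2 / (1 - r ^ 2)))
      ≤ ENNReal.ofReal (Real.log L) := by
  have hmem : ∀ t : ℝ, |t| < 1 → ((t:ℂ) * ξ) ∈ ball (0:ℂ) 1 := by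
    intro t ht
    rw [mem_ball_zero_iff]
    rw [show ‖(t:ℂ)*ξ‖ = ‖(t:ℂ)*ξ‖ from rfl, norm_mul, Complex.norm_real, Real.norm_eq_abs, hξ, mul_one]
    exact ht
  set a : ℝ → ℝ := fun t => ‖f ((t:ℂ) * ξ)‖ with ha_def
  have ha_lt : ∀ t : ℝ, |t| < 1 → a t < 1 := fun t ht =>
    mem_ball_zero_iff.1 (hmap _ (hmem t ht))
  have ha_nn : ∀ t, 0 ≤ a t := fun t => norm_nonneg _
  have hfd : ∀ z ∈ ball (0:ℂ) 1, DifferentiableAt ℂ f z := fun z hz =>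
    hf.differentiableAt (isOpen_ball.mem_nhds hz)
  have hderiv_cont : ContinuousOn (deriv f) (ball (0:ℂ) 1) :=
    ((hf.analyticOnNhd isOpen_ball).deriv).continuousOn
  have hc : Continuous (fun t : ℝ => (t:ℂ) * ξ) := Complex.continuous_ofReal.mul continuous_const
  have hIooS : MapsTo (fun t : ℝ => (t:ℂ)*ξ) (Ioo (-1:ℝ) 1) (ball (0:ℂ) 1) := by
    intro t ht; exact hmem t (abs_lt.2 ⟨ht.1, ht.2⟩)
  have ha_cont : ContinuousOn a (Ioo (-1:ℝ) 1) :=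
    continuous_norm.comp_continuousOn ((hf.continuousOn).comp hc.continuousOn hIooS)
  have ha2_pos : ∀ t : ℝ, |t| < 1 → 0 < 1 - a t ^ 2 := by
    intro t ht
    have h1 := ha_lt t ht
    have h2 := ha_nn t
    nlinarith
  set m : ℝ → ℝ := fun t => ‖deriv f ((t:ℂ) * ξ)‖ / (1 - a t ^ 2) with hm_def
  have hm_cont : ContinuousOn m (Ioo (-1:ℝ) 1) := by
    apply ContinuousOn.div
    · exact continuous_norm.comp_continuousOn (hderiv_cont.comp hc.continuousOn hIooS)
    · exact continuousOn_const.sub (ha_cont.pow 2)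
    · intro t ht
      exact (ha2_pos t (abs_lt.2 ⟨ht.1, ht.2⟩)).ne'
  set Φ : ℝ → ℝ := fun t => ∫ s in (0:ℝ)..t, m s with hΦ_def
  have hΦd : ∀ t ∈ Ioo (-1:ℝ) 1, HasDerivAt Φ (m t) t := by
    intro t ht
    apply intervalIntegral.integral_hasDerivAt_right
    · apply (hm_cont.mono ?_).intervalIntegrable
      intro x hx
      rcases Set.mem_uIcc.1 hx with ⟨h1, h2⟩ | ⟨h1, h2⟩ <;>
        exact ⟨by linarith [ht.1, ht.2], by linarith [ht.1, ht.2]⟩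
    · exact ⟨Ioo (-1:ℝ) 1, Ioo_mem_nhds ht.1 ht.2,
        (hm_cont.mono subset_rfl).aestronglyMeasurable measurableSet_Ioo⟩
    · exact hm_cont.continuousAt (Ioo_mem_nhds ht.1 ht.2)
  have habs2 : ∀ t : ℝ, ‖(t:ℂ)*ξ‖ ^ 2 = t ^ 2 := by
    intro t
    rw [norm_mul, Complex.norm_real, Real.norm_eq_abs, hξ, mul_one, _root_.sq_abs]
  -- main per-radius estimate
  have key : ∀ ρ ∈ Ioo (0:ℝ) 1,
      (∫ t in (0:ℝ)..ρ, (1 - hypDeriv f ((t:ℂ) * ξ)) * (2 / (1 - t ^ 2))) ≤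
        Real.log ((1 - a ρ)/(1 - ρ)) + Real.log ((1 + ρ)/(1 + a ρ)) := by
    intro ρ hρ
    obtain ⟨hρ0, hρ1⟩ := hρ
    have hsub : Icc (0:ℝ) ρ ⊆ Ioo (-1:ℝ) 1 := fun x hx =>
      ⟨by linarith [hx.1], by linarith [hx.2]⟩
    have haρ : a ρ < 1 := ha_lt ρ (by rw [abs_of_pos hρ0]; exact hρ1)
    -- Step A : a ρ ≤ myT (Φ ρ)
    have hstepA : a ρ ≤ myT (Φ ρ) := by
      have main : ∀ ε : ℝ, 0 < ε → a ρ ≤ myT (Φ ρ + ε * ρ) := by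
        intro ε hε
        set B : ℝ → ℝ := fun t => myT (Φ t + ε * t) with hB_def
        have hBd : ∀ t ∈ Icc (0:ℝ) ρ, HasDerivAt B ((1 - B t ^ 2) * (m t + ε)) t := by
          intro t ht
          have h1 : HasDerivAt (fun t : ℝ => Φ t + ε * t) (m t + ε) t := by
            have := (hΦd t (hsub ht)).add ((hasDerivAt_id t).const_mul ε)
            exact this.congr_deriv (by ring)
          exact (hasDerivAt_myT _).comp t h1
        have hg' : ∀ t ∈ Icc (0:ℝ) ρ,
            HasDerivAt (fun s : ℝ => f ((s:ℂ) * ξ)) (deriv f ((t:ℂ)*ξ) * ξ) t := by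
          intro t ht
          have ht1 : |t| < 1 := abs_lt.2 ⟨by linarith [ht.1], by linarith [ht.2]⟩
          have hz := hmem t ht1
          have hmul : HasDerivAt (fun z : ℂ => z * ξ) ξ (t:ℂ) := by
            simpa using (hasDerivAt_id ((t:ℂ))).mul_const ξ
          have hF : HasDerivAt (fun z : ℂ => f (z * ξ)) (deriv f ((t:ℂ)*ξ) * ξ) ((t:ℂ)) :=
            HasDerivAt.comp _ ((hfd _ hz).hasDerivAt) hmul
          exact hF.comp_ofReal
        have hg_cont : ContinuousOn (fun s : ℝ => f ((s:ℂ) * ξ)) (Icc (0:ℝ) ρ) := by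
          apply (hf.continuousOn).comp hc.continuousOn
          intro t ht
          exact hmem t (abs_lt.2 ⟨by linarith [ht.1], by linarith [ht.2]⟩)
        have conc := image_norm_le_of_norm_deriv_right_lt_deriv_boundary'
          (f := fun s : ℝ => f ((s:ℂ) * ξ)) (f' := fun t => deriv f ((t:ℂ)*ξ) * ξ)
          (a := 0) (b := ρ) (B := B) (B' := fun t => (1 - B t ^ 2) * (m t + ε))
          hg_cont
          (fun t ht => ((hg' t (Ico_subset_Icc_self ht)).hasDerivWithinAt))
          (by
            simp only [hB_def]
            rw [show ((0:ℝ):ℂ) * ξ = 0 by simp, h0]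
            simp [hΦ_def, intervalIntegral.integral_same, myT_zero])
          (fun t ht => (hBd t ht).continuousAt.continuousWithinAt)
          (fun t ht => (hBd t (Ico_subset_Icc_self ht)).hasDerivWithinAt)
          (by
            intro t ht heq
            have ht1 : |t| < 1 := abs_lt.2 ⟨by linarith [ht.1], by linarith [ht.2]⟩
            have h2 := ha2_pos t ht1
            show ‖deriv f ((t:ℂ)*ξ) * ξ‖ < (1 - B t ^ 2) * (m t + ε)
            have hBt : B t = a t := by
              rw [← heq]
            rw [hBt]
            have hmt : (1 - a t ^ 2) * m t = ‖deriv f ((t:ℂ)*ξ)‖ := by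
              simp only [hm_def]
              field_simp
            have : ‖deriv f ((t:ℂ)*ξ) * ξ‖ = ‖deriv f ((t:ℂ)*ξ)‖ := by
              rw [show ‖deriv f ((t:ℂ)*ξ) * ξ‖ = ‖deriv f ((t:ℂ)*ξ) * ξ‖ from rfl,
                norm_mul, hξ, mul_one]
            rw [this]
            nlinarith)
        have := conc (right_mem_Icc.2 hρ0.le)
        simpa [hB_def] using this
      have hcont : Tendsto (fun ε : ℝ => myT (Φ ρ + ε * ρ)) (nhdsWithin 0 (Ioi 0))
          (nhds (myT (Φ ρ))) := by
        have hco : Continuous fun ε : ℝ => myT (Φ ρ + ε * ρ) :=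
          continuous_myT.comp (continuous_const.add (continuous_id.mul continuous_const))
        have h := hco.tendsto 0
        simp only [zero_mul, add_zero] at h
        exact h.mono_left nhdsWithin_le_nhds
      exact ge_of_tendsto hcont (eventually_nhdsWithin_of_forall (fun ε hε => main ε hε))
    have hlog : Real.log ((1 + a ρ)/(1 - a ρ)) ≤ 2 * Φ ρ := log_ratio_le (ha_nn ρ) hstepA
    -- integral computation
    have hu_cont : ContinuousOn (fun t : ℝ => 2/(1-t^2)) (Icc (0:ℝ) ρ) := by
      apply ContinuousOn.div continuousOn_const (by fun_prop)
      intro x hx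
      have h1 : (0:ℝ) ≤ x := hx.1
      have h2 : x ≤ ρ := hx.2
      nlinarith
    have hu_int : IntervalIntegrable (fun t : ℝ => 2/(1-t^2)) volume 0 ρ := by
      apply ContinuousOn.intervalIntegrable
      rwa [uIcc_of_le hρ0.le]
    have hm_int : IntervalIntegrable m volume 0 ρ := by
      apply (hm_cont.mono ?_).intervalIntegrable
      rw [uIcc_of_le hρ0.le]
      exact hsub
    have hJ : ∫ t in (0:ℝ)..ρ, 2/(1-t^2) = Real.log (1+ρ) - Real.log (1-ρ) := by
      have hder : ∀ t ∈ uIcc (0:ℝ) ρ,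
          HasDerivAt (fun t : ℝ => Real.log (1+t) - Real.log (1-t)) (2/(1-t^2)) t := by
        intro t ht
        rw [uIcc_of_le hρ0.le] at ht
        have h1 : (0:ℝ) < 1 + t := by linarith [ht.1]
        have h2 : (0:ℝ) < 1 - t := by linarith [ht.2]
        have d1 : HasDerivAt (fun t : ℝ => Real.log (1+t)) (1/(1+t)) t := by
          have := (Real.hasDerivAt_log h1.ne').comp t ((hasDerivAt_id t).const_add 1)
          exact this.congr_deriv (by simp [one_div])
        have d2 : HasDerivAt (fun t : ℝ => Real.log (1-t)) (-(1/(1-t))) t := by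
          have := (Real.hasDerivAt_log h2.ne').comp t ((hasDerivAt_id t).const_sub 1)
          exact this.congr_deriv (by simp [one_div])
        have := d1.sub d2
        have h3 : (1:ℝ) - t^2 ≠ 0 := by nlinarith
        refine this.congr_deriv ?_
        field_simp
        ring
      have := intervalIntegral.integral_eq_sub_of_hasDerivAt hder hu_int
      rw [this]
      norm_num
    have hEq : EqOn (fun t : ℝ => (1 - hypDeriv f ((t:ℂ)*ξ)) * (2/(1-t^2)))
        (fun t : ℝ => 2/(1-t^2) - 2 * m t) (uIcc (0:ℝ) ρ) := by
      intro t ht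
      rw [uIcc_of_le hρ0.le] at ht
      have ht1 : |t| < 1 := abs_lt.2 ⟨by linarith [ht.1], by linarith [ht.2]⟩
      have h3 := ha2_pos t ht1
      have h4 : (0:ℝ) < 1 - t^2 := by nlinarith [abs_lt.1 ht1]
      simp only [hm_def]
      unfold hypDeriv
      rw [habs2 t]
      show (1 - (1 - t ^ 2) * ‖deriv f ((t:ℂ)*ξ)‖ / (1 - a t ^ 2)) * (2 / (1 - t ^ 2))
        = 2 / (1 - t ^ 2) - 2 * (‖deriv f ((t:ℂ)*ξ)‖ / (1 - a t ^ 2))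
      field_simp
      try ring
    have hIcalc : ∫ t in (0:ℝ)..ρ, (1 - hypDeriv f ((t:ℂ)*ξ)) * (2/(1-t^2))
        = (Real.log (1+ρ) - Real.log (1-ρ)) - 2 * Φ ρ := by
      rw [intervalIntegral.integral_congr hEq,
        intervalIntegral.integral_sub hu_int (hm_int.const_mul 2),
        intervalIntegral.integral_const_mul, hJ]
    rw [hIcalc]
    have hp1 : (0:ℝ) < 1 + a ρ := by linarith [ha_nn ρ]
    have hp2 : (0:ℝ) < 1 - a ρ := by linarith
    have hp3 : (0:ℝ) < 1 - ρ := by linarith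
    have hp4 : (0:ℝ) < 1 + ρ := by linarith
    rw [Real.log_div hp2.ne' hp3.ne', Real.log_div hp4.ne' hp1.ne']
    rw [Real.log_div hp1.ne' hp2.ne'] at hlog
    linarith
  -- continuity and nonnegativity of the real integrand
  set h : ℝ → ℝ := fun t => (1 - hypDeriv f ((t:ℂ)*ξ)) * (2/(1-t^2)) with hh_def
  have hh_nn : ∀ t ∈ Ioo (0:ℝ) 1, 0 ≤ h t := by
    intro t ht
    have ht1 : |t| < 1 := abs_lt.2 ⟨by linarith [ht.1], ht.2⟩
    have h2 := ha2_pos t ht1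
    have h4 : (0:ℝ) < 1 - t^2 := by nlinarith [abs_lt.1 ht1]
    have hsp := schwarzPick f hf hmap (hmem t ht1)
    have hhyp : hypDeriv f ((t:ℂ)*ξ) ≤ 1 := by
      unfold hypDeriv
      rw [div_le_one (by rw [show ‖f ((t:ℂ)*ξ)‖ = a t from rfl]; exact h2)]
      exact hsp
    have : (0:ℝ) ≤ 2/(1-t^2) := by positivity
    exact mul_nonneg (by linarith) this
  have hh_cont : ContinuousOn h (Ioo (-1:ℝ) 1) := by
    have hypcont : ContinuousOn (fun t : ℝ => hypDeriv f ((t:ℂ)*ξ)) (Ioo (-1:ℝ) 1) := by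
      unfold hypDeriv
      apply ContinuousOn.div
      · apply ContinuousOn.mul
        · exact continuousOn_const.sub
            ((continuous_norm.comp_continuousOn hc.continuousOn).pow 2)
        · exact continuous_norm.comp_continuousOn
            (hderiv_cont.comp hc.continuousOn hIooS)
      · exact continuousOn_const.sub (ha_cont.pow 2)
      · intro t ht
        exact (ha2_pos t (abs_lt.2 ⟨ht.1, ht.2⟩)).ne'
    apply ContinuousOn.mul (continuousOn_const.sub hypcont)
    apply ContinuousOn.div continuousOn_const (by fun_prop)
    intro t ht
    have : t^2 < 1 := by nlinarith [ht.1, ht.2]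
    nlinarith
  have hsub01 : Ioo (0:ℝ) 1 ⊆ Ioo (-1:ℝ) 1 := fun x hx => ⟨by linarith [hx.1], hx.2⟩
  -- per-radius lintegral bound
  have step1 : ∀ ρ ∈ Ioo (0:ℝ) 1, ∫⁻ t in Ioo 0 ρ, ENNReal.ofReal (h t)
      ≤ ENNReal.ofReal (Real.log ((1 - a ρ)/(1-ρ)) + Real.log ((1+ρ)/(1+a ρ))) := by
    intro ρ hρ
    have hsubIcc : Icc (0:ℝ) ρ ⊆ Ioo (-1:ℝ) 1 := fun x hx =>
      ⟨by linarith [hx.1], by linarith [hx.2, hρ.2]⟩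
    have hint : IntegrableOn h (Ioo 0 ρ) volume :=
      ((hh_cont.mono hsubIcc).integrableOn_Icc).mono_set Ioo_subset_Icc_self
    have hnn : 0 ≤ᵐ[volume.restrict (Ioo 0 ρ)] h :=
      (ae_restrict_iff' measurableSet_Ioo).2 (ae_of_all _ (fun t ht =>
        hh_nn t ⟨ht.1, lt_of_lt_of_le ht.2 hρ.2.le⟩))
    rw [← ofReal_integral_eq_lintegral_ofReal hint hnn]
    apply ENNReal.ofReal_le_ofReal
    have heq2 : ∫ t in Ioo 0 ρ, h t = ∫ t in (0:ℝ)..ρ, h t := by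
      rw [intervalIntegral.integral_of_le hρ.1.le, ← integral_Ioc_eq_integral_Ioo]
    rw [heq2]
    exact key ρ hρ
  -- sequence of radii
  set ρs : ℕ → ℝ := fun n => 1 - 1/(n+2) with hρs_def
  have hρs_mem : ∀ n, ρs n ∈ Ioo (0:ℝ) 1 := by
    intro n
    have h2 : (0:ℝ) < (n:ℝ) + 2 := by positivity
    have hpos : 0 < 1/((n:ℝ)+2) := by positivity
    have hle : 1/((n:ℝ)+2) ≤ 1/2 := by
      rw [div_le_div_iff₀ h2 two_pos]
      have : (0:ℝ) ≤ (n:ℝ) := Nat.cast_nonneg n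
      linarith
    exact ⟨by simp only [hρs_def]; linarith, by simp only [hρs_def]; linarith⟩
  have hρs_mono : Monotone ρs := by
    intro i j hij
    simp only [hρs_def]
    have hij' : ((i:ℝ)+2) ≤ ((j:ℝ)+2) := by
      have : (i:ℝ) ≤ (j:ℝ) := Nat.cast_le.2 hij
      linarith
    have : 1/((j:ℝ)+2) ≤ 1/((i:ℝ)+2) :=
      one_div_le_one_div_of_le (by positivity) hij'
    linarith
  have hρs_tend : Tendsto ρs atTop (nhds 1) := by
    have h1 : Tendsto (fun n : ℕ => ((n:ℝ)+2)) atTop atTop :=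
      tendsto_atTop_add_const_right _ 2 tendsto_natCast_atTop_atTop
    have h2 : Tendsto (fun n : ℕ => 1/((n:ℝ)+2)) atTop (nhds 0) := by
      exact h1.inv_tendsto_atTop.congr (fun n => by simp [one_div])
    have := (tendsto_const_nhds (x := (1:ℝ))).sub h2
    simpa [hρs_def, one_div] using this
  have hρs_tendW : Tendsto ρs atTop (nhdsWithin 1 (Iio 1)) :=
    tendsto_nhdsWithin_of_tendsto_nhds_of_eventually_within _ hρs_tend
      (Eventually.of_forall fun n => (hρs_mem n).2)
  -- L ≥ 1 and limit of the bound
  have hIoomem : Ioo (0:ℝ) 1 ∈ nhdsWithin 1 (Iio 1) := by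
    apply mem_nhdsWithin.2 ⟨Ioi 0, isOpen_Ioi, by norm_num, ?_⟩
    intro x hx
    exact ⟨hx.1, hx.2⟩
  have hq_ge : ∀ᶠ ρ in nhdsWithin 1 (Iio 1), (1:ℝ) ≤ (1 - a ρ)/(1 - ρ) := by
    filter_upwards [hIoomem] with ρ hρ
    have haρ : a ρ ≤ ρ := by
      have hlt : ‖(ρ:ℂ)*ξ‖ < 1 := by
        rw [norm_mul, Complex.norm_real, Real.norm_eq_abs, hξ, mul_one, abs_of_pos hρ.1]
        exact hρ.2
      have := Complex.norm_le_norm_of_mapsTo_ball hf (fun z hz => ball_subset_closedBall (hmap z hz)) h0 hlt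
      rw [show ‖f ((ρ:ℂ)*ξ)‖ = a ρ from rfl] at this
      rw [norm_mul, Complex.norm_real, Real.norm_eq_abs, hξ, mul_one, abs_of_pos hρ.1] at this
      exact this
    rw [le_div_iff₀ (by linarith [hρ.2])]
    linarith
  have hL1 : (1:ℝ) ≤ L := ge_of_tendsto hL hq_ge
  have ha_tend1 : Tendsto (fun ρ : ℝ => a ρ) (nhdsWithin 1 (Iio 1)) (nhds 1) := by
    have hone : Tendsto (fun ρ : ℝ => 1 - ρ) (nhdsWithin 1 (Iio 1)) (nhds 0) := by
      have hco : Continuous (fun ρ : ℝ => 1 - ρ) := by fun_prop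
      have h := hco.tendsto 1
      norm_num at h
      exact h.mono_left nhdsWithin_le_nhds
    have h2 : Tendsto (fun ρ : ℝ => ((1 - a ρ)/(1-ρ)) * (1-ρ)) (nhdsWithin 1 (Iio 1))
        (nhds (L * 0)) := hL.mul hone
    have h3 : ∀ᶠ ρ in nhdsWithin 1 (Iio 1), ((1 - a ρ)/(1-ρ)) * (1-ρ) = 1 - a ρ := by
      filter_upwards [self_mem_nhdsWithin] with ρ hρ
      have hne : (1:ℝ) - ρ ≠ 0 := by rw [mem_Iio] at hρ; intro hc; apply absurd hc; intro h; linarith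
      field_simp
    have h4 : Tendsto (fun ρ : ℝ => 1 - a ρ) (nhdsWithin 1 (Iio 1)) (nhds 0) := by
      rw [mul_zero] at h2
      exact Tendsto.congr' h3 h2
    have := (tendsto_const_nhds (x := (1:ℝ))).sub h4
    simpa using this
  have hbnd_tend : Tendsto (fun ρ : ℝ => Real.log ((1 - a ρ)/(1-ρ)) + Real.log ((1+ρ)/(1+a ρ)))
      (nhdsWithin 1 (Iio 1)) (nhds (Real.log L)) := by
    have hLne : L ≠ 0 := by linarith
    have hterm1 : Tendsto (fun ρ : ℝ => Real.log ((1 - a ρ)/(1-ρ))) (nhdsWithin 1 (Iio 1))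
        (nhds (Real.log L)) := ((Real.continuousAt_log hLne).tendsto).comp hL
    have hterm2 : Tendsto (fun ρ : ℝ => Real.log ((1+ρ)/(1+a ρ))) (nhdsWithin 1 (Iio 1))
        (nhds 0) := by
      have hnum : Tendsto (fun ρ : ℝ => 1+ρ) (nhdsWithin 1 (Iio 1)) (nhds 2) := by
        have hco : Continuous (fun ρ : ℝ => 1+ρ) := by fun_prop
        have h := hco.tendsto 1
        norm_num at h
        exact h.mono_left nhdsWithin_le_nhds
      have hden : Tendsto (fun ρ : ℝ => 1 + a ρ) (nhdsWithin 1 (Iio 1)) (nhds 2) := by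
        have h := (tendsto_const_nhds (x := (1:ℝ))).add ha_tend1
        norm_num at h
        exact h
      have hdiv := hnum.div hden two_ne_zero
      have h22 : (2:ℝ)/2 = 1 := by norm_num
      rw [h22] at hdiv
      have := ((Real.continuousAt_log one_ne_zero).tendsto).comp hdiv
      rw [Real.log_one] at this; exact this
    have := hterm1.add hterm2
    simpa using this
  -- assemble
  set G : ℝ → ENNReal := fun t => ENNReal.ofReal (h t) with hG_def
  have hGae : AEMeasurable G (volume.restrict (Ioo (0:ℝ) 1)) :=
    ENNReal.measurable_ofReal.comp_aemeasurable
      ((hh_cont.mono hsub01).aemeasurable measurableSet_Ioo)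
  set gs : ℕ → ℝ → ENNReal := fun n => (Ioo (0:ℝ) (ρs n)).indicator G with hgs_def
  have hgs_meas : ∀ n, AEMeasurable (gs n) (volume.restrict (Ioo (0:ℝ) 1)) := fun n =>
    hGae.indicator measurableSet_Ioo
  have hgs_mono : ∀ᵐ x ∂(volume.restrict (Ioo (0:ℝ) 1)), Monotone fun n => gs n x := by
    apply ae_of_all
    intro x i j hij
    exact indicator_le_indicator_of_subset (Ioo_subset_Ioo le_rfl (hρs_mono hij))
      (fun _ => zero_le) x
  have hsup : ∀ᵐ x ∂(volume.restrict (Ioo (0:ℝ) 1)), G x = ⨆ n, gs n x := by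
    filter_upwards [ae_restrict_mem measurableSet_Ioo] with x hx
    obtain ⟨n, hn⟩ : ∃ n, x < ρs n :=
      (hρs_tend.eventually (eventually_gt_nhds hx.2)).exists
    apply le_antisymm
    · have hxmem : x ∈ Ioo (0:ℝ) (ρs n) := ⟨hx.1, hn⟩
      exact le_iSup_of_le n (le_of_eq (Set.indicator_of_mem hxmem G).symm)
    · exact iSup_le fun n => indicator_le_self _ _ x
  have hmain : ∫⁻ r in Ioo (0:ℝ) 1, G r ≤ ENNReal.ofReal (Real.log L) := by
    rw [lintegral_congr_ae hsup, lintegral_iSup' hgs_meas hgs_mono]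
    apply iSup_le
    intro n
    have heq : ∫⁻ r in Ioo (0:ℝ) 1, gs n r = ∫⁻ r in Ioo (0:ℝ) (ρs n), G r := by
      rw [hgs_def]
      rw [lintegral_indicator measurableSet_Ioo, Measure.restrict_restrict measurableSet_Ioo]
      congr 1
      rw [inter_eq_self_of_subset_left (Ioo_subset_Ioo le_rfl (hρs_mem n).2.le)]
    rw [heq]
    apply ge_of_tendsto (ENNReal.tendsto_ofReal (hbnd_tend.comp hρs_tendW))
    filter_upwards [eventually_ge_atTop n] with k hk
    calc ∫⁻ r in Ioo (0:ℝ) (ρs n), G r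
        ≤ ∫⁻ r in Ioo (0:ℝ) (ρs k), G r :=
          lintegral_mono_set (Ioo_subset_Ioo le_rfl (hρs_mono hk))
      _ ≤ _ := step1 (ρs k) (hρs_mem k)
  exact hmain
end

section
/- Let f : 𝔻 → 𝔻 be holomorphic and let ξ ∈ 𝕋 be such that f has radial limit of modulus 1 along the radius to ξ. Then for every 0 < R < 1, one has ∫₀^R (1 - D_h f(rξ))·2/(1-r²) dr ≤ d_h(0, Rξ) - d_h(0, f(Rξ)) + d_h(0, f(0)), where d_h is the hyperbolic distance and D_h f is the hyperbolic derivative. -/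
open Complex MeasureTheory Metric Set Filter
open scoped RealInnerProductSpace

lemma ftc_ineq {U : Set ℝ} (hU : IsOpen U) {a b : ℝ} (hab : a ≤ b) (hsub : Icc a b ⊆ U)
    {φ φ' g : ℝ → ℝ} (hg : ContinuousOn g U)
    (hφc : ContinuousOn φ (Icc a b))
    (hφ : ∀ x ∈ Ioo a b, HasDerivAt φ (φ' x) x)
    (hle : ∀ x ∈ Ioo a b, φ' x ≤ g x) :
    φ b - φ a ≤ ∫ x in a..b, g x := by
  rcases eq_or_lt_of_le hab with rfl | hab'
  · simp
  set H : ℝ → ℝ := fun x => ∫ t in a..x, g t with hHdef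
  have hHd : ∀ x ∈ Icc a b, HasDerivAt H (g x) x := by
    intro x hx
    have hxU : x ∈ U := hsub hx
    apply intervalIntegral.integral_hasDerivAt_right
    · apply (hg.mono ?_).intervalIntegrable
      intro t ht
      apply hsub
      rw [uIcc_of_le hx.1] at ht
      exact ⟨ht.1, ht.2.trans hx.2⟩
    · exact hg.stronglyMeasurableAtFilter hU x hxU
    · exact hg.continuousAt (hU.mem_nhds hxU)
  have hmono : MonotoneOn (fun x => H x - φ x) (Icc a b) := by
    apply monotoneOn_of_hasDerivWithinAt_nonneg (f' := fun x => g x - φ' x) (convex_Icc a b)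
    · exact ContinuousOn.sub (fun x hx => (hHd x hx).continuousAt.continuousWithinAt) hφc
    · intro x hx
      rw [interior_Icc] at hx
      exact ((hHd x (Ioo_subset_Icc_self hx)).sub (hφ x hx)).hasDerivWithinAt
    · intro x hx
      rw [interior_Icc] at hx
      linarith [hle x hx]
  have h := hmono (left_mem_Icc.2 hab) (right_mem_Icc.2 hab) hab
  have hHa : H a = 0 := intervalIntegral.integral_same
  simp only [hHa] at h
  linarith



lemma hypDist_zero (w : ℂ) : hypDist 0 w = Real.log ((1 + ‖w‖) / (1 - ‖w‖)) := by
  simp [hypDist, pseudoDist]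


/-- If `f : 𝔻 → 𝔻` is holomorphic and has radial limit of modulus 1 at `ξ ∈ 𝕋`, then for every
`0 < R < 1` the accumulated Möbius distortion along `[0, Rξ]` is at most
`d_h(0, Rξ) - d_h(0, f(Rξ)) + d_h(0, f(0))`. -/
theorem partial_accumulated_distortion_bound
    (f : ℂ → ℂ) (hf : DifferentiableOn ℂ f (ball (0:ℂ) 1))
    (hmap : ∀ z ∈ ball (0:ℂ) 1, f z ∈ ball (0:ℂ) 1)
    (ξ : ℂ) (hξ : ‖ξ‖ = 1)
    (hrad : Tendsto (fun r : ℝ => ‖f ((r:ℂ) * ξ)‖)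
      (nhdsWithin 1 (Iio 1)) (nhds 1)) :
    ∀ R : ℝ, 0 < R → R < 1 →
      (∫ r in Ioo (0:ℝ) R, (1 - hypDeriv f ((r:ℂ) * ξ)) * (2 / (1 - r ^ 2)))
        ≤ hypDist 0 ((R:ℂ) * ξ) - hypDist 0 (f ((R:ℂ) * ξ)) + hypDist 0 (f 0) := by
  have hnξ : ‖ξ‖ = 1 := by exact hξ
  set u : ℝ → ℂ := fun r => f ((r:ℂ) * ξ) with hu_def
  set v : ℝ → ℂ := fun r => ξ * deriv f ((r:ℂ) * ξ) with hv_def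
  have hball : ∀ r : ℝ, |r| < 1 → ((r:ℂ) * ξ) ∈ ball (0:ℂ) 1 := by
    intro r hr
    rw [mem_ball_zero_iff]
    simp [hnξ, abs_lt.1 hr, hr, Complex.norm_real]
  have hm1 : ∀ r : ℝ, |r| < 1 → ‖u r‖ < 1 := by
    intro r hr
    have := hmap _ (hball r hr)
    rwa [mem_ball_zero_iff] at this
  have hu : ∀ r : ℝ, |r| < 1 → HasDerivAt u (v r) r := by
    intro r hr
    have hdf : HasDerivAt f (deriv f ((r:ℂ) * ξ)) ((r:ℂ) * ξ) :=
      (hf.differentiableAt (isOpen_ball.mem_nhds (hball r hr))).hasDerivAt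
    have hlin : HasDerivAt (fun t : ℝ => (t:ℂ) * ξ) ξ r := by
      simpa using (Complex.ofRealCLM.hasDerivAt (x := r)).mul_const ξ
    have h := (hdf.hasFDerivAt.restrictScalars ℝ).comp_hasDerivAt r hlin
    have h' : HasDerivAt u
        (((1 : ℂ →L[ℂ] ℂ).smulRight (deriv f ((r:ℂ) * ξ))).restrictScalars ℝ ξ) r := h
    simpa [hv_def] using h'
  have hderivc : ContinuousOn (deriv f) (ball (0:ℂ) 1) :=
    ((hf.analyticOnNhd isOpen_ball).deriv).continuousOn
  have hlincont : Continuous (fun r : ℝ => (r:ℂ) * ξ) := by fun_prop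
  have hIoosub : ∀ r : ℝ, r ∈ Ioo (-1:ℝ) 1 → |r| < 1 := fun r hr => abs_lt.2 ⟨hr.1, hr.2⟩
  have hucont : ContinuousOn u (Ioo (-1:ℝ) 1) :=
    hf.continuousOn.comp hlincont.continuousOn (fun r hr => hball r (hIoosub r hr))
  have hmcont : ContinuousOn (fun r => ‖u r‖) (Ioo (-1:ℝ) 1) := hucont.norm
  set g : ℝ → ℝ := fun r => 2 * ‖deriv f ((r:ℂ) * ξ)‖ / (1 - ‖u r‖ ^ 2) with hg_def
  have hdenom : ∀ r : ℝ, |r| < 1 → 0 < 1 - ‖u r‖ ^ 2 := by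
    intro r hr
    have h1 := hm1 r hr
    have h0 : 0 ≤ ‖u r‖ := norm_nonneg _
    nlinarith
  have hgc : ContinuousOn g (Ioo (-1:ℝ) 1) := by
    apply ContinuousOn.div
    · exact continuousOn_const.mul
        ((hderivc.comp hlincont.continuousOn (fun r hr => hball r (hIoosub r hr))).norm)
    · exact continuousOn_const.sub (hmcont.pow 2)
    · exact fun r hr => (hdenom r (hIoosub r hr)).ne'
  have hgnonneg : ∀ r : ℝ, |r| < 1 → 0 ≤ g r := by
    intro r hr
    exact div_nonneg (by positivity) (hdenom r hr).le
  set φ : ℝ → ℝ := fun r => Real.log (1 + ‖u r‖) - Real.log (1 - ‖u r‖) with hφ_def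
  have hφc : ContinuousOn φ (Ioo (-1:ℝ) 1) := by
    apply ContinuousOn.sub
    · exact (continuousOn_const.add hmcont).log
        (fun r hr => (by positivity : (0:ℝ) < 1 + ‖u r‖).ne')
    · exact (continuousOn_const.sub hmcont).log
        (fun r hr => (by linarith [hm1 r (hIoosub r hr)] : (0:ℝ) < 1 - ‖u r‖).ne')
  have key : ∀ a b : ℝ, 0 ≤ a → a ≤ b → b < 1 → (∀ x ∈ Ioo a b, u x ≠ 0) →
      φ b - φ a ≤ ∫ x in a..b, g x := by
    intro a b ha hab hb hne
    have hsub : Icc a b ⊆ Ioo (-1:ℝ) 1 := fun x hx => ⟨by linarith [hx.1], by linarith [hx.2]⟩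
    apply ftc_ineq isOpen_Ioo hab hsub hgc (hφc.mono hsub)
      (φ' := fun x => (⟪u x, v x⟫ / ‖u x‖) / (1 + ‖u x‖) - (-(⟪u x, v x⟫ / ‖u x‖)) / (1 - ‖u x‖))
    · intro x hx
      have hx1 : |x| < 1 := hIoosub x (hsub (Ioo_subset_Icc_self hx))
      have hux : u x ≠ 0 := hne x hx
      have hm0 : (0:ℝ) < ‖u x‖ := norm_pos_iff.2 hux
      have hmlt : ‖u x‖ < 1 := hm1 x hx1
      have hderm : HasDerivAt (fun r => ‖u r‖) (⟪u x, v x⟫ / ‖u x‖) x := by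
        have h2 := (hu x hx1).norm_sq
        have h3 := h2.sqrt (by positivity : ((‖u ·‖ ^ 2) x) ≠ 0)
        have heq : (fun y => Real.sqrt ((‖u ·‖ ^ 2) y)) = fun y => ‖u y‖ := by
          funext y; exact Real.sqrt_sq (norm_nonneg _)
        have hval : 2 * ⟪u x, v x⟫ / (2 * Real.sqrt ((‖u ·‖ ^ 2) x)) = ⟪u x, v x⟫ / ‖u x‖ := by
          have : Real.sqrt ((‖u ·‖ ^ 2) x) = ‖u x‖ := Real.sqrt_sq (norm_nonneg _)
          rw [this]; ring
        rw [heq, hval] at h3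
        exact h3
      have l1 : HasDerivAt (fun r => Real.log (1 + ‖u r‖))
          ((⟪u x, v x⟫ / ‖u x‖) / (1 + ‖u x‖)) x :=
        (hderm.const_add 1).log (by positivity)
      have l2 : HasDerivAt (fun r => Real.log (1 - ‖u r‖))
          ((-(⟪u x, v x⟫ / ‖u x‖)) / (1 - ‖u x‖)) x :=
        (hderm.const_sub 1).log (by linarith)
      exact l1.sub l2
    · intro x hx
      have hx1 : |x| < 1 := hIoosub x (hsub (Ioo_subset_Icc_self hx))
      have hux : u x ≠ 0 := hne x hx
      have hm0 : (0:ℝ) < ‖u x‖ := norm_pos_iff.2 hux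
      have hmlt : ‖u x‖ < 1 := hm1 x hx1
      have hvn : ‖v x‖ = ‖deriv f ((x:ℂ) * ξ)‖ := by
        rw [hv_def]; simp [norm_mul, hnξ]
      have hie : |⟪u x, v x⟫ / ‖u x‖| ≤ ‖deriv f ((x:ℂ) * ξ)‖ := by
        rw [abs_div, abs_of_pos hm0, div_le_iff₀ hm0, ← hvn]
        calc |⟪u x, v x⟫| ≤ ‖u x‖ * ‖v x‖ := abs_real_inner_le_norm _ _
          _ = ‖v x‖ * ‖u x‖ := mul_comm _ _
      set d : ℝ := ⟪u x, v x⟫ / ‖u x‖ with hd_def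
      have hden := hdenom x hx1
      have general : ∀ d m A : ℝ, 0 < m → m < 1 → |d| ≤ A →
          d / (1 + m) - (-d) / (1 - m) ≤ 2 * A / (1 - m ^ 2) := by
        intro d m A h0 h1 hdA
        have hp1 : (0:ℝ) < 1 + m := by linarith
        have hp2 : (0:ℝ) < 1 - m := by linarith
        have hp3 : (0:ℝ) < 1 - m ^ 2 := by nlinarith
        have heq : d / (1 + m) - (-d) / (1 - m) = 2 * d / (1 - m ^ 2) := by
          field_simp
          ring
        rw [heq]
        gcongr
        linarith [le_abs_self d, hdA]
      exact general _ _ _ hm0 hmlt hie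
  intro R hR0 hR1
  have hRabs : |R| < 1 := abs_lt.2 ⟨by linarith, hR1⟩
  -- the distortion integral bound
  have hφstep : φ R - φ 0 ≤ ∫ x in (0:ℝ)..R, g x := by
    set S := Icc (0:ℝ) R ∩ u ⁻¹' {0} with hS_def
    by_cases hS : S.Nonempty
    · have hcontIcc : ContinuousOn u (Icc 0 R) :=
        hucont.mono (fun x hx => ⟨by linarith [hx.1], by linarith [hx.2]⟩)
      have hScl : IsClosed S :=
        hcontIcc.preimage_isClosed_of_isClosed isClosed_Icc isClosed_singleton
      have hScp : IsCompact S :=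
        isCompact_Icc.of_isClosed_subset hScl inter_subset_left
      set z := sSup S with hz_def
      have hzS : z ∈ S := hScp.sSup_mem hS
      obtain ⟨⟨hz0, hzR⟩, hz_zero⟩ := hzS
      rw [mem_preimage, mem_singleton_iff] at hz_zero
      have hφz : φ z = 0 := by simp [hφ_def, hz_zero]
      have hm01 : ‖u 0‖ < 1 := hm1 0 (by norm_num)
      have h0φ : 0 ≤ φ 0 := by
        have ha : (0:ℝ) ≤ Real.log (1 + ‖u 0‖) :=
          Real.log_nonneg (by linarith [norm_nonneg (u 0)])
        have hb : Real.log (1 - ‖u 0‖) ≤ 0 :=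
          Real.log_nonpos (by linarith) (by linarith [norm_nonneg (u 0)])
        have hφ0 : φ 0 = Real.log (1 + ‖u 0‖) - Real.log (1 - ‖u 0‖) := rfl
        linarith [hφ0 ▸ (le_refl (φ 0))]
      have h1 : φ R - φ z ≤ ∫ x in z..R, g x := by
        apply key z R hz0 hzR hR1
        intro x hx h0
        have hxS : x ∈ S := ⟨⟨by linarith [hx.1], hx.2.le⟩, by simpa using h0⟩
        have := le_csSup hScp.bddAbove hxS
        linarith [hx.1]
      have hsubIcc : ∀ p q : ℝ, 0 ≤ p → q ≤ R → Icc p q ⊆ Ioo (-1:ℝ) 1 :=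
        fun p q hp hq x hx => ⟨by linarith [hx.1], by linarith [hx.2]⟩
      have hint1 : IntervalIntegrable g volume 0 z := by
        apply (hgc.mono _).intervalIntegrable
        rw [uIcc_of_le hz0]
        exact hsubIcc 0 z le_rfl hzR
      have hint2 : IntervalIntegrable g volume z R := by
        apply (hgc.mono _).intervalIntegrable
        rw [uIcc_of_le hzR]
        exact hsubIcc z R hz0 le_rfl
      have hsplit := intervalIntegral.integral_add_adjacent_intervals hint1 hint2
      have hpos : 0 ≤ ∫ x in (0:ℝ)..z, g x := by
        apply intervalIntegral.integral_nonneg hz0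
        intro x hx
        exact hgnonneg x (abs_lt.2 ⟨by linarith [hx.1], by linarith [hx.2]⟩)
      linarith
    · apply key 0 R le_rfl hR0.le hR1
      intro x hx h0
      exact hS ⟨x, ⟨⟨hx.1.le, hx.2.le⟩, by simpa using h0⟩⟩
  -- the weight integral
  have hw : (∫ x in (0:ℝ)..R, 2 / (1 - x ^ 2)) = Real.log ((1 + R) / (1 - R)) := by
    have hderivF : ∀ x ∈ uIcc (0:ℝ) R,
        HasDerivAt (fun r => Real.log (1 + r) - Real.log (1 - r)) (2 / (1 - x ^ 2)) x := by
      intro x hx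
      rw [uIcc_of_le hR0.le] at hx
      have hx0 : (0:ℝ) ≤ x := hx.1
      have hxR : x ≤ R := hx.2
      have h1 : HasDerivAt (fun r : ℝ => 1 + r) 1 x := by
        simpa using (hasDerivAt_id x).const_add 1
      have h2 : HasDerivAt (fun r : ℝ => 1 - r) (-1) x := by
        simpa using (hasDerivAt_id x).const_sub 1
      have l1 := h1.log (by positivity : (1:ℝ) + x ≠ 0)
      have l2 := h2.log ((by linarith : (0:ℝ) < 1 - x).ne')
      have l3 := l1.sub l2
      refine l3.congr_deriv ?_
      have e1 : (1:ℝ) + x ≠ 0 := by positivity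
      have e2 : (1:ℝ) - x ≠ 0 := (by linarith : (0:ℝ) < 1 - x).ne'
      have e3 : (1:ℝ) - x ^ 2 ≠ 0 := by nlinarith
      field_simp
      ring
    have hint : IntervalIntegrable (fun x : ℝ => 2 / (1 - x ^ 2)) volume 0 R := by
      apply ContinuousOn.intervalIntegrable
      apply ContinuousOn.div continuousOn_const (by fun_prop)
      intro x hx
      rw [uIcc_of_le hR0.le] at hx
      have : x ^ 2 < 1 := by nlinarith [hx.1, hx.2]
      intro h
      linarith
    rw [intervalIntegral.integral_eq_sub_of_hasDerivAt hderivF hint]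
    rw [Real.log_div (by linarith) (by linarith)]
    norm_num
  -- integrability of g on [0, R]
  have hintg : IntervalIntegrable g volume 0 R := by
    apply (hgc.mono _).intervalIntegrable
    rw [uIcc_of_le hR0.le]
    exact fun x hx => ⟨by linarith [hx.1], by linarith [hx.2]⟩
  have hintw : IntervalIntegrable (fun x : ℝ => 2 / (1 - x ^ 2)) volume 0 R := by
    apply ContinuousOn.intervalIntegrable
    apply ContinuousOn.div continuousOn_const (by fun_prop)
    intro x hx
    rw [uIcc_of_le hR0.le] at hx
    have : x ^ 2 < 1 := by nlinarith [hx.1, hx.2]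
    intro h
    linarith
  -- rewrite the integrand on Ioo 0 R
  have hEqOn : EqOn (fun r : ℝ => (1 - hypDeriv f ((r:ℂ) * ξ)) * (2 / (1 - r ^ 2)))
      (fun r : ℝ => 2 / (1 - r ^ 2) - g r) (Ioo 0 R) := by
    intro r hr
    have hr1 : |r| < 1 := abs_lt.2 ⟨by linarith [hr.1], by linarith [hr.2]⟩
    have habsr : ‖(r:ℂ) * ξ‖ = r := by
      rw [norm_mul, hξ, Complex.norm_real, Real.norm_eq_abs, abs_of_pos hr.1, mul_one]
    have hr2 : (1:ℝ) - r ^ 2 ≠ 0 := by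
      have : r ^ 2 < 1 := by nlinarith [hr.1, hr.2]
      intro h; linarith
    have hB : (1:ℝ) - ‖f ((r:ℂ) * ξ)‖ ^ 2 ≠ 0 := by
      have := hdenom r hr1
      rw [hu_def] at this
      exact ne_of_gt this
    simp only [hypDeriv, hg_def, habsr, hu_def]
    field_simp
  rw [setIntegral_congr_fun measurableSet_Ioo hEqOn]
  rw [← integral_Ioc_eq_integral_Ioo, ← intervalIntegral.integral_of_le hR0.le]
  rw [intervalIntegral.integral_sub hintw hintg]
  -- identify the hyperbolic distances
  have hhyp1 : hypDist 0 ((R:ℂ) * ξ) = Real.log ((1 + R) / (1 - R)) := by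
    rw [hypDist_zero, norm_mul, hξ, Complex.norm_real, Real.norm_eq_abs, abs_of_pos hR0, mul_one]
  have hmR : ‖u R‖ < 1 := hm1 R hRabs
  have hm0' : ‖u 0‖ < 1 := hm1 0 (by norm_num)
  have hhyp2 : hypDist 0 (f ((R:ℂ) * ξ)) = φ R := by
    rw [hypDist_zero]
    have : ‖f ((R:ℂ) * ξ)‖ = ‖u R‖ := by rw [hu_def]
    rw [this, Real.log_div (by linarith [norm_nonneg (u R)]) (by linarith)]
  have hu0 : u 0 = f 0 := by rw [hu_def]; norm_num
  have hhyp3 : hypDist 0 (f 0) = φ 0 := by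
    rw [hypDist_zero]
    have : ‖f 0‖ = ‖u 0‖ := by rw [hu0]
    rw [this, Real.log_div (by linarith [norm_nonneg (u 0)]) (by linarith)]
  rw [hhyp1, hhyp2, hhyp3, hw]
  clear_value u v g φ
  have hgoal : Real.log ((1 + R) / (1 - R)) - (∫ (x : ℝ) in (0:ℝ)..R, g x)
      ≤ Real.log ((1 + R) / (1 - R)) - φ R + φ 0 := by linarith
  exact hgoal
end

section
/- Let f : 𝔻 → 𝔻 be holomorphic. Then for any z, w ∈ 𝔻, the hyperbolic derivative satisfies d_h(D_h f(z), D_h f(w)) ≤ 2 d_h(z, w), where on the left-hand side D_h f(z), D_h f(w) ∈ [0,1] ⊂ 𝔻 are treated as points of the disc (with the convention that d_h is the hyperbolic distance on [0,1)). -/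
open Complex MeasureTheory Metric Set Filter
open Topology

/-! ### Auxiliary lemmas -/

noncomputable def Lfun (x : ℝ) : ℝ := Real.log ((1 + x) / (1 - x))

lemma BM.mem_ball_iff {z : ℂ} : z ∈ ball (0:ℂ) 1 ↔ ‖z‖ < 1 := by
  simp [mem_ball, Complex.dist_eq]

lemma BM.normSq_key (a u : ℂ) :
    normSq (1 - (starRingEnd ℂ) a * u) - normSq (u - a) = (1 - normSq a) * (1 - normSq u) := by
  simp [Complex.normSq_apply, Complex.sub_re, Complex.sub_im, Complex.mul_re, Complex.mul_im]
  ring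

lemma BM.denom_ne_zero {a u : ℂ} (ha : ‖a‖ < 1) (hu : ‖u‖ < 1) :
    (1 : ℂ) - (starRingEnd ℂ) a * u ≠ 0 := by
  intro h
  have h2 : ‖(starRingEnd ℂ) a * u‖ < 1 := by
    rw [norm_mul, Complex.norm_conj]
    nlinarith [norm_nonneg a, norm_nonneg u]
  have : (1 : ℂ) = (starRingEnd ℂ) a * u := by linear_combination h
  rw [← this] at h2; simp at h2

lemma BM.abs_sub_lt_denom {a u : ℂ} (ha : ‖a‖ < 1) (hu : ‖u‖ < 1) :
    ‖u - a‖ < ‖1 - (starRingEnd ℂ) a * u‖ := by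
  have h1 : normSq (u - a) < normSq (1 - (starRingEnd ℂ) a * u) := by
    have := BM.normSq_key a u
    have ha' : normSq a < 1 := by rw [← Complex.sq_norm] at *; nlinarith [norm_nonneg a]
    have hu' : normSq u < 1 := by rw [← Complex.sq_norm] at *; nlinarith [norm_nonneg u]
    nlinarith
  have := Real.sqrt_lt_sqrt (normSq_nonneg _) h1
  simpa [Complex.norm_def] using this

lemma BM.pseudoDist_nonneg (z w : ℂ) : 0 ≤ pseudoDist z w :=
  div_nonneg (norm_nonneg _) (norm_nonneg _)

lemma BM.pseudoDist_lt_one {z w : ℂ} (hz : ‖z‖ < 1) (hw : ‖w‖ < 1) :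
    pseudoDist z w < 1 := by
  rw [pseudoDist, div_lt_one]
  · exact BM.abs_sub_lt_denom hw hz
  · have := BM.abs_sub_lt_denom hw hz
    have := norm_nonneg (z - w)
    linarith

lemma BM.pseudoDist_symm (z w : ℂ) : pseudoDist z w = pseudoDist w z := by
  unfold pseudoDist
  rw [← Complex.norm_conj (1 - (starRingEnd ℂ) w * z)]
  simp only [map_sub, map_mul, map_one, Complex.conj_conj]
  rw [norm_sub_rev z w, mul_comm]

lemma BM.pseudoDist_self (z : ℂ) : pseudoDist z z = 0 := by
  simp [pseudoDist]

lemma BM.hypDist_self (z : ℂ) : hypDist z z = 0 := by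
  simp [hypDist, BM.pseudoDist_self]

lemma BM.hypDist_symm (z w : ℂ) : hypDist z w = hypDist w z := by
  simp [hypDist, BM.pseudoDist_symm z w]

lemma BM.hypDist_nonneg {z w : ℂ} (h : pseudoDist z w < 1) : 0 ≤ hypDist z w := by
  rw [hypDist]
  apply Real.log_nonneg
  rw [le_div_iff₀ (by linarith)]
  have := BM.pseudoDist_nonneg z w
  linarith

lemma BM.Lfun_mono {x y : ℝ} (hx : 0 ≤ x) (hxy : x ≤ y) (hy : y < 1) : Lfun x ≤ Lfun y := by
  unfold Lfun
  apply Real.log_le_log (div_pos (by linarith) (by linarith))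
  rw [div_le_div_iff₀ (by linarith) (by linarith)]
  nlinarith

lemma BM.pseudoDist_real (x y : ℝ) : pseudoDist (x:ℂ) (y:ℂ) = |x - y| / |1 - y * x| := by
  unfold pseudoDist
  rw [Complex.conj_ofReal, ← Complex.ofReal_sub]
  have : (1:ℂ) - (y:ℂ) * (x:ℂ) = ((1 - y * x : ℝ) : ℂ) := by push_cast; ring
  rw [this, Complex.norm_real, Complex.norm_real, Real.norm_eq_abs, Real.norm_eq_abs]

lemma BM.hypDist_real_ord {a b : ℝ} (hb0 : 0 ≤ b) (hba : b ≤ a) (ha1 : a < 1) :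
    hypDist (a:ℂ) (b:ℂ) = Lfun a - Lfun b := by
  have hab : b * a < 1 := by nlinarith
  have h1a : (0:ℝ) < 1 - a := by linarith
  have h1b : (0:ℝ) < 1 - b := by linarith
  have h1a' : (0:ℝ) < 1 + a := by linarith
  have h1b' : (0:ℝ) < 1 + b := by linarith
  have hr : pseudoDist (a:ℂ) (b:ℂ) = (a - b) / (1 - b * a) := by
    rw [BM.pseudoDist_real, _root_.abs_of_nonneg (show (0:ℝ) ≤ a - b by linarith),
      _root_.abs_of_pos (show (0:ℝ) < 1 - b * a by linarith)]
  rw [hypDist, hr]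
  have hne : (1 - b * a) ≠ 0 := by linarith
  have e1 : 1 + (a - b) / (1 - b * a) = ((1 + a) * (1 - b)) / (1 - b * a) := by
    rw [eq_div_iff hne, add_mul, div_mul_cancel₀ _ hne]; ring
  have e2 : 1 - (a - b) / (1 - b * a) = ((1 - a) * (1 + b)) / (1 - b * a) := by
    rw [eq_div_iff hne, sub_mul, div_mul_cancel₀ _ hne]; ring
  have key : (1 + (a - b) / (1 - b * a)) / (1 - (a - b) / (1 - b * a))
      = ((1 + a) * (1 - b)) / ((1 - a) * (1 + b)) := by
    have hne2 : ((1 - a) * (1 + b)) ≠ 0 := by positivity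
    rw [e1, e2]
    field_simp
    exact div_self (by intro h; nlinarith)
  rw [key, Lfun, Lfun]
  rw [Real.log_div (by positivity) (by positivity), Real.log_div (by positivity) (by positivity),
    Real.log_div (by positivity) (by positivity), Real.log_mul (by positivity) (by positivity),
    Real.log_mul (by positivity) (by positivity)]
  ring

lemma BM.hypDist_real {a b : ℝ} (ha0 : 0 ≤ a) (ha1 : a < 1) (hb0 : 0 ≤ b) (hb1 : b < 1) :
    hypDist (a:ℂ) (b:ℂ) = |Lfun a - Lfun b| := by
  rcases le_total b a with h | h
  · have hm := BM.Lfun_mono hb0 h ha1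
    rw [BM.hypDist_real_ord hb0 h ha1,
      _root_.abs_of_nonneg (by linarith : (0:ℝ) ≤ Lfun a - Lfun b)]
  · have hm := BM.Lfun_mono ha0 h hb1
    rw [BM.hypDist_symm, BM.hypDist_real_ord ha0 h hb1,
      _root_.abs_of_nonpos (by linarith : Lfun a - Lfun b ≤ 0)]
    ring

/-- Radialization decreases the hyperbolic distance. -/
lemma BM.radial {a b : ℂ} (ha : ‖a‖ < 1) (hb : ‖b‖ < 1) :
    hypDist ((‖a‖ : ℝ) : ℂ) ((‖b‖ : ℝ) : ℂ) ≤ hypDist a b := by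
  have hρ : pseudoDist a b < 1 := BM.pseudoDist_lt_one ha hb
  have hρ0 : 0 ≤ pseudoDist a b := BM.pseudoDist_nonneg a b
  have key : pseudoDist ((‖a‖ : ℝ) : ℂ) ((‖b‖ : ℝ) : ℂ) ≤ pseudoDist a b := by
    set x := ‖a‖ with hx
    set y := ‖b‖ with hy
    have hx0 : 0 ≤ x := norm_nonneg a
    have hy0 : 0 ≤ y := norm_nonneg b
    have hxy : y * x < 1 := by nlinarith
    rw [BM.pseudoDist_real, _root_.abs_of_pos (show (0:ℝ) < 1 - y * x by linarith), pseudoDist]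
    -- squares comparison
    have hc : (0:ℝ) < (1 - normSq a) * (1 - normSq b) := by
      have ha' : normSq a < 1 := by rw [← Complex.sq_norm]; nlinarith
      have hb' : normSq b < 1 := by rw [← Complex.sq_norm]; nlinarith
      have ha'' : 0 ≤ normSq a := normSq_nonneg a
      have hb'' : 0 ≤ normSq b := normSq_nonneg b
      nlinarith
    have hI1 : ‖1 - (starRingEnd ℂ) b * a‖ ^ 2
        = ‖a - b‖ ^ 2 + (1 - normSq a) * (1 - normSq b) := by
      rw [Complex.sq_norm, Complex.sq_norm]
      have := BM.normSq_key b a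
      linarith [this]
    have hI2 : (1 - y * x) ^ 2 = |x - y| ^ 2 + (1 - normSq a) * (1 - normSq b) := by
      rw [_root_.sq_abs, ← Complex.sq_norm a, ← Complex.sq_norm b, ← hx, ← hy]
      ring
    have hxyle : |x - y| ≤ ‖a - b‖ := by
      rw [hx, hy]
      exact abs_norm_sub_norm_le a b
    -- now compare the quotients
    have hd : 0 < ‖1 - (starRingEnd ℂ) b * a‖ := by
      have := BM.abs_sub_lt_denom hb ha
      have := norm_nonneg (a - b)
      linarith
    rw [div_le_div_iff₀ (by linarith) hd]
    have hsq : (|x - y| * ‖1 - (starRingEnd ℂ) b * a‖) ^ 2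
        ≤ (‖a - b‖ * (1 - y * x)) ^ 2 := by
      rw [mul_pow, mul_pow, hI1, hI2]
      have husq : |x - y| ^ 2 ≤ ‖a - b‖ ^ 2 := by
        nlinarith [abs_nonneg (x - y)]
      nlinarith [mul_le_mul_of_nonneg_left husq hc.le]
    have h1 : 0 ≤ |x - y| * ‖1 - (starRingEnd ℂ) b * a‖ := by positivity
    have h2 : 0 ≤ ‖a - b‖ * (1 - y * x) := by
      have : 0 ≤ 1 - y * x := by linarith
      positivity
    nlinarith
  -- monotonicity of log((1+x)/(1-x))
  have h0 : 0 ≤ pseudoDist ((‖a‖ : ℝ) : ℂ) ((‖b‖ : ℝ) : ℂ) :=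
    BM.pseudoDist_nonneg _ _
  exact BM.Lfun_mono h0 key hρ

/-- The Möbius map. -/
noncomputable def BM.moeb (a u : ℂ) : ℂ := (u - a) / (1 - (starRingEnd ℂ) a * u)

lemma BM.abs_moeb (a u : ℂ) : ‖BM.moeb a u‖ = pseudoDist u a := by
  simp [BM.moeb, pseudoDist, map_div₀]

lemma BM.moeb_mem {a u : ℂ} (ha : ‖a‖ < 1) (hu : ‖u‖ < 1) :
    ‖BM.moeb a u‖ < 1 := by
  rw [BM.abs_moeb]; exact BM.pseudoDist_lt_one hu ha

lemma BM.moeb_diff {a u : ℂ} (h : (1:ℂ) - (starRingEnd ℂ) a * u ≠ 0) :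
    DifferentiableAt ℂ (BM.moeb a) u := by
  apply DifferentiableAt.div
  · fun_prop
  · fun_prop
  · exact h

lemma BM.moeb_inv {w z : ℂ} (hw : ‖w‖ < 1) (hz : ‖z‖ < 1) :
    BM.moeb (-w) (BM.moeb w z) = z := by
  set c := (starRingEnd ℂ) w with hc
  have h1 : (1:ℂ) - c * z ≠ 0 := BM.denom_ne_zero hw hz
  have h3 : (1:ℂ) - c * w ≠ 0 := by
    have : ‖c * w‖ < 1 := by
      rw [norm_mul, hc, Complex.norm_conj]
      nlinarith [norm_nonneg w]
    intro h
    have h' : (1:ℂ) = c * w := by linear_combination h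
    rw [← h'] at this; simp at this
  have hYne : ((1:ℂ) - c * w) / (1 - c * z) ≠ 0 := div_ne_zero h3 h1
  have hgoal : BM.moeb (-w) (BM.moeb w z)
      = ((z - w) / (1 - c * z) + w) / (1 + c * ((z - w) / (1 - c * z))) := by
    unfold BM.moeb
    simp only [map_neg, neg_mul, sub_neg_eq_add, ← hc]
  have hnum : (z - w) / (1 - c * z) + w = z * (((1:ℂ) - c * w) / (1 - c * z)) := by
    rw [mul_div_assoc', eq_div_iff h1, add_mul, div_mul_cancel₀ _ h1]
    ring
  have hden : (1:ℂ) + c * ((z - w) / (1 - c * z)) = ((1:ℂ) - c * w) / (1 - c * z) := by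
    rw [eq_div_iff h1, add_mul, mul_assoc, div_mul_cancel₀ _ h1]
    ring
  rw [hgoal, hnum, hden, mul_div_cancel_right₀ z hYne]

example : True := trivial

lemma BM.pseudoDist_pos {z w : ℂ} (hz : ‖z‖ < 1) (hw : ‖w‖ < 1)
    (hne : z ≠ w) : 0 < pseudoDist z w := by
  apply div_pos
  · rw [norm_pos_iff]; exact sub_ne_zero.2 hne
  · rw [norm_pos_iff]; exact BM.denom_ne_zero hw hz

lemma BM.hypDist_eq_Lfun (z w : ℂ) : hypDist z w = Lfun (pseudoDist z w) := rfl

/-- Schwarz–Pick. -/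
lemma BM.schwarzPick (f : ℂ → ℂ) (hf : DifferentiableOn ℂ f (ball (0:ℂ) 1))
    (hmap : ∀ z ∈ ball (0:ℂ) 1, f z ∈ ball (0:ℂ) 1)
    {z w : ℂ} (hz : z ∈ ball (0:ℂ) 1) (hw : w ∈ ball (0:ℂ) 1) :
    pseudoDist (f z) (f w) ≤ pseudoDist z w := by
  have hz1 : ‖z‖ < 1 := BM.mem_ball_iff.1 hz
  have hw1 : ‖w‖ < 1 := BM.mem_ball_iff.1 hw
  have hfw1 : ‖f w‖ < 1 := BM.mem_ball_iff.1 (hmap w hw)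
  set F : ℂ → ℂ := fun ζ => BM.moeb (f w) (f (BM.moeb (-w) ζ)) with hF
  have hw' : ‖-w‖ < 1 := by simpa using hw1
  have hmw : ∀ ζ ∈ ball (0:ℂ) 1, BM.moeb (-w) ζ ∈ ball (0:ℂ) 1 := fun ζ hζ =>
    BM.mem_ball_iff.2 (BM.moeb_mem hw' (BM.mem_ball_iff.1 hζ))
  have hFdiff : DifferentiableOn ℂ F (ball (0:ℂ) 1) := by
    intro ζ hζ
    apply DifferentiableAt.differentiableWithinAt
    have h1 : DifferentiableAt ℂ (BM.moeb (-w)) ζ :=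
      BM.moeb_diff (BM.denom_ne_zero hw' (BM.mem_ball_iff.1 hζ))
    have h2 : DifferentiableAt ℂ f (BM.moeb (-w) ζ) :=
      hf.differentiableAt (isOpen_ball.mem_nhds (hmw ζ hζ))
    have hin : ‖f (BM.moeb (-w) ζ)‖ < 1 := BM.mem_ball_iff.1 (hmap _ (hmw ζ hζ))
    have h3 : DifferentiableAt ℂ (BM.moeb (f w)) (f (BM.moeb (-w) ζ)) :=
      BM.moeb_diff (BM.denom_ne_zero hfw1 hin)
    exact h3.comp ζ (h2.comp ζ h1)
  have hF0 : F 0 = 0 := by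
    have mw0 : BM.moeb (-w) 0 = w := by
      simp [BM.moeb]
    show BM.moeb (f w) (f (BM.moeb (-w) 0)) = 0
    rw [mw0]
    simp [BM.moeb]
  have hFmaps : MapsTo F (ball (0:ℂ) 1) (ball (F 0) 1) := by
    rw [hF0]
    intro ζ hζ
    have hin : ‖f (BM.moeb (-w) ζ)‖ < 1 := BM.mem_ball_iff.1 (hmap _ (hmw ζ hζ))
    exact BM.mem_ball_iff.2 (BM.moeb_mem hfw1 hin)
  have hmem : BM.moeb w z ∈ ball (0:ℂ) 1 := BM.mem_ball_iff.2 (BM.moeb_mem hw1 hz1)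
  have hschwarz := Complex.dist_le_div_mul_dist_of_mapsTo_ball hFdiff (hFmaps.mono_right ball_subset_closedBall) hmem
  rw [hF0] at hschwarz
  have hFval : F (BM.moeb w z) = BM.moeb (f w) (f z) := by
    rw [hF]
    simp only [BM.moeb_inv hw1 hz1]
  rw [hFval] at hschwarz
  simp only [Complex.dist_eq, sub_zero, one_div_one, one_mul] at hschwarz
  rw [BM.abs_moeb, BM.abs_moeb] at hschwarz
  simpa using hschwarz

/-- The hyperbolic difference quotient based at `w`. -/
noncomputable def BM.Ffun (f : ℂ → ℂ) (w : ℂ) : ℂ → ℂ :=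
  fun u => (f u - f w) / (1 - (starRingEnd ℂ) (f w) * f u)

noncomputable def BM.G (f : ℂ → ℂ) (w : ℂ) : ℂ → ℂ :=
  fun ζ => (1 - (starRingEnd ℂ) w * ζ) * dslope (BM.Ffun f w) w ζ

section Gsec

variable {f : ℂ → ℂ} (hf : DifferentiableOn ℂ f (ball (0:ℂ) 1))
  (hmap : ∀ z ∈ ball (0:ℂ) 1, f z ∈ ball (0:ℂ) 1) {w : ℂ} (hw : w ∈ ball (0:ℂ) 1)

include hf hmap hw

lemma BM.G_diff : DifferentiableOn ℂ (BM.G f w) (ball (0:ℂ) 1) := by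
  have hFd : DifferentiableOn ℂ (BM.Ffun f w) (ball (0:ℂ) 1) := by
    intro u hu
    apply DifferentiableAt.differentiableWithinAt
    have hfu : DifferentiableAt ℂ f u := hf.differentiableAt (isOpen_ball.mem_nhds hu)
    have hfu1 : ‖f u‖ < 1 := BM.mem_ball_iff.1 (hmap u hu)
    have hfw1 : ‖f w‖ < 1 := BM.mem_ball_iff.1 (hmap w hw)
    exact (hfu.sub_const (f w)).div ((differentiableAt_const (1:ℂ)).sub
      (hfu.const_mul _)) (BM.denom_ne_zero hfw1 hfu1)
  have hds : DifferentiableOn ℂ (dslope (BM.Ffun f w) w) (ball (0:ℂ) 1) :=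
    (differentiableOn_dslope (isOpen_ball.mem_nhds hw)).2 hFd
  have h1 : DifferentiableOn ℂ (fun ζ : ℂ => (1:ℂ) - (starRingEnd ℂ) w * ζ) (ball (0:ℂ) 1) := by
    fun_prop
  exact h1.mul hds

lemma BM.G_at_base : ‖BM.G f w w‖ = hypDeriv f w := by
  have hw1 : ‖w‖ < 1 := BM.mem_ball_iff.1 hw
  have hfw1 : ‖f w‖ < 1 := BM.mem_ball_iff.1 (hmap w hw)
  have hd : (1:ℂ) - (starRingEnd ℂ) (f w) * f w ≠ 0 := BM.denom_ne_zero hfw1 hfw1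
  have hfd : HasDerivAt f (deriv f w) w :=
    (hf.differentiableAt (isOpen_ball.mem_nhds hw)).hasDerivAt
  have h1 : HasDerivAt (fun u => f u - f w) (deriv f w) w := hfd.sub_const _
  have h2 : HasDerivAt (fun u => (1:ℂ) - (starRingEnd ℂ) (f w) * f u)
      (-((starRingEnd ℂ) (f w) * deriv f w)) w := (hfd.const_mul _).const_sub 1
  have h3 : HasDerivAt (BM.Ffun f w)
      ((deriv f w * ((1:ℂ) - (starRingEnd ℂ) (f w) * f w) -
        (f w - f w) * -((starRingEnd ℂ) (f w) * deriv f w)) /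
          ((1:ℂ) - (starRingEnd ℂ) (f w) * f w) ^ 2) w := h1.div h2 hd
  have hder : deriv (BM.Ffun f w) w = deriv f w / (1 - (starRingEnd ℂ) (f w) * f w) := by
    rw [h3.deriv]
    field_simp
    ring
  have hGw : BM.G f w w = (1 - (starRingEnd ℂ) w * w) * (deriv f w / (1 - (starRingEnd ℂ) (f w) * f w)) := by
    rw [BM.G]
    simp only [dslope_same, hder]
  rw [hGw]
  have e1 : (1:ℂ) - (starRingEnd ℂ) w * w = ((1 - ‖w‖ ^ 2 : ℝ) : ℂ) := by
    rw [conj_mul']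
    push_cast
    ring
  have e2 : (1:ℂ) - (starRingEnd ℂ) (f w) * f w = ((1 - ‖f w‖ ^ 2 : ℝ) : ℂ) := by
    rw [conj_mul']
    push_cast
    ring
  rw [e1, norm_mul, norm_div, e2, Complex.norm_real, Complex.norm_real, Real.norm_eq_abs, Real.norm_eq_abs,
    _root_.abs_of_pos (show (0:ℝ) < 1 - ‖w‖ ^ 2 by nlinarith [norm_nonneg w]),
    _root_.abs_of_pos (show (0:ℝ) < 1 - ‖f w‖ ^ 2 by nlinarith [norm_nonneg (f w)])]
  rw [hypDeriv]
  ring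

lemma BM.G_ne_base {ζ : ℂ} (hζ : ζ ∈ ball (0:ℂ) 1) (hne : ζ ≠ w) :
    ‖BM.G f w ζ‖ = pseudoDist (f ζ) (f w) / pseudoDist ζ w := by
  have hζ1 : ‖ζ‖ < 1 := BM.mem_ball_iff.1 hζ
  have hw1 : ‖w‖ < 1 := BM.mem_ball_iff.1 hw
  have hFw : BM.Ffun f w w = 0 := by simp [BM.Ffun]
  have hds : dslope (BM.Ffun f w) w ζ = (BM.Ffun f w ζ) / (ζ - w) := by
    rw [dslope_of_ne _ hne, slope_def_field, hFw, sub_zero]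
  show ‖(1 - (starRingEnd ℂ) w * ζ) * dslope (BM.Ffun f w) w ζ‖ = _
  rw [hds, norm_mul, norm_div]
  have hFabs : ‖BM.Ffun f w ζ‖ = pseudoDist (f ζ) (f w) := by
    rw [show BM.Ffun f w ζ = (f ζ - f w) / (1 - (starRingEnd ℂ) (f w) * f ζ) from rfl, norm_div]
    rfl
  rw [hFabs]
  rw [show pseudoDist ζ w = ‖ζ - w‖ / ‖1 - (starRingEnd ℂ) w * ζ‖ from rfl]
  have h1 : ‖ζ - w‖ ≠ 0 := by
    rw [norm_ne_zero_iff]; exact sub_ne_zero.2 hne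
  have h2 : ‖1 - (starRingEnd ℂ) w * ζ‖ ≠ 0 := by
    rw [norm_ne_zero_iff]; exact BM.denom_ne_zero hw1 hζ1
  field_simp

lemma BM.G_le_one : ∀ ζ ∈ ball (0:ℂ) 1, ‖BM.G f w ζ‖ ≤ 1 := by
  have hlt : ∀ ζ ∈ ball (0:ℂ) 1, ζ ≠ w → ‖BM.G f w ζ‖ ≤ 1 := by
    intro ζ hζ hne
    rw [BM.G_ne_base hf hmap hw hζ hne]
    have hpos : 0 < pseudoDist ζ w :=
      BM.pseudoDist_pos (BM.mem_ball_iff.1 hζ) (BM.mem_ball_iff.1 hw) hne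
    rw [div_le_one hpos]
    exact BM.schwarzPick f hf hmap hζ hw
  intro ζ hζ
  rcases eq_or_ne ζ w with rfl | hne
  · -- continuity argument at the base point
    have hGd : DifferentiableAt ℂ (BM.G f ζ) ζ :=
      (BM.G_diff hf hmap hζ).differentiableAt (isOpen_ball.mem_nhds hζ)
    have hco : ContinuousAt (fun u => ‖BM.G f ζ u‖) ζ :=
      continuous_norm.continuousAt.comp hGd.continuousAt
    have hset : {ζ}ᶜ ∩ ball (0:ℂ) 1 = ball (0:ℂ) 1 \ {ζ} := by
      ext x; simp [and_comm]
    have hfilter : 𝓝[({ζ}ᶜ : Set ℂ)] ζ = 𝓝[ball (0:ℂ) 1 \ {ζ}] ζ := by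
      rw [nhdsWithin_restrict' ({ζ}ᶜ : Set ℂ) (isOpen_ball.mem_nhds hζ), hset]
    have hnb : (𝓝[ball (0:ℂ) 1 \ {ζ}] ζ).NeBot := by
      rw [← hfilter]; infer_instance
    have htend : Tendsto (fun u => ‖BM.G f ζ u‖) (𝓝[ball (0:ℂ) 1 \ {ζ}] ζ)
        (𝓝 (‖BM.G f ζ ζ‖)) := hco.continuousWithinAt.tendsto
    refine le_of_tendsto htend ?_
    filter_upwards [eventually_mem_nhdsWithin] with u hu
    exact hlt u hu.1 hu.2
  · exact hlt ζ hζ hne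

lemma BM.G_const_of_not_lt (h : ¬ ∀ ζ ∈ ball (0:ℂ) 1, ‖BM.G f w ζ‖ < 1) :
    ∀ ζ ∈ ball (0:ℂ) 1, ‖BM.G f w ζ‖ = 1 := by
  push_neg at h
  obtain ⟨ζ₀, hζ₀, h1⟩ := h
  have heq : ‖BM.G f w ζ₀‖ = 1 :=
    le_antisymm (BM.G_le_one hf hmap hw ζ₀ hζ₀) h1
  have hmax : IsMaxOn (norm ∘ BM.G f w) (ball (0:ℂ) 1) ζ₀ := by
    intro ζ hζ
    simp only [Function.comp_apply, heq]
    exact BM.G_le_one hf hmap hw ζ hζ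
  have hconst := Complex.norm_eqOn_of_isPreconnected_of_isMaxOn
    (convex_ball (0:ℂ) 1).isPreconnected isOpen_ball (BM.G_diff hf hmap hw) hζ₀ hmax
  intro ζ hζ
  have := hconst hζ
  simp only [Function.comp_apply, Function.const_apply] at this
  rw [this, heq]

end Gsec

/-- Beardon–Minda: the hyperbolic derivative of a holomorphic self-map of the disc, viewed as a
point of `[0,1] ⊆ 𝔻`, is 2-Lipschitz in the hyperbolic distance. -/
theorem hyp_deriv_lipschitz
    (f : ℂ → ℂ) (hf : DifferentiableOn ℂ f (ball (0:ℂ) 1))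
    (hmap : ∀ z ∈ ball (0:ℂ) 1, f z ∈ ball (0:ℂ) 1) :
    ∀ z ∈ ball (0:ℂ) 1, ∀ w ∈ ball (0:ℂ) 1,
      hypDist ((hypDeriv f z : ℝ) : ℂ) ((hypDeriv f w : ℝ) : ℂ) ≤ 2 * hypDist z w := by
  intro z hz w hw
  rcases eq_or_ne z w with rfl | hzw
  · simp [BM.hypDist_self]
  have hz1 : ‖z‖ < 1 := BM.mem_ball_iff.1 hz
  have hw1 : ‖w‖ < 1 := BM.mem_ball_iff.1 hw
  have hρz : pseudoDist z w < 1 := BM.pseudoDist_lt_one hz1 hw1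
  have hρ0 : 0 ≤ pseudoDist z w := BM.pseudoDist_nonneg z w
  have hwz : w ≠ z := Ne.symm hzw
  -- the two hyperbolic difference quotients agree in modulus at the other point
  have et' : ‖BM.G f z w‖ = ‖BM.G f w z‖ := by
    rw [BM.G_ne_base hf hmap hz hw hwz, BM.G_ne_base hf hmap hw hz hzw,
      BM.pseudoDist_symm (f w) (f z), BM.pseudoDist_symm w z]
  by_cases hPw : ∀ ζ ∈ ball (0:ℂ) 1, ‖BM.G f w ζ‖ < 1
  · by_cases hPz : ∀ ζ ∈ ball (0:ℂ) 1, ‖BM.G f z ζ‖ < 1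
    · -- main case : both difference quotients map into the open disc
      set Dz := hypDeriv f z with hDz
      set Dw := hypDeriv f w with hDw
      set t := ‖BM.G f w z‖ with ht
      have eDz : Dz = ‖BM.G f z z‖ := (BM.G_at_base hf hmap hz).symm
      have eDw : Dw = ‖BM.G f w w‖ := (BM.G_at_base hf hmap hw).symm
      have hDz0 : 0 ≤ Dz := by rw [eDz]; exact norm_nonneg _
      have hDw0 : 0 ≤ Dw := by rw [eDw]; exact norm_nonneg _
      have ht0 : 0 ≤ t := norm_nonneg _
      have hDz1 : Dz < 1 := by rw [eDz]; exact hPz z hz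
      have hDw1 : Dw < 1 := by rw [eDw]; exact hPw w hw
      have ht1 : t < 1 := hPw z hz
      -- Schwarz–Pick for an auxiliary holomorphic self-map
      have hSP : ∀ G : ℂ → ℂ, DifferentiableOn ℂ G (ball (0:ℂ) 1) →
          (∀ ζ ∈ ball (0:ℂ) 1, ‖G ζ‖ < 1) →
          hypDist (G z) (G w) ≤ hypDist z w := by
        intro G hGd hGm
        have h := BM.schwarzPick G hGd (fun ζ hζ => BM.mem_ball_iff.2 (hGm ζ hζ)) hz hw
        rw [BM.hypDist_eq_Lfun, BM.hypDist_eq_Lfun]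
        exact BM.Lfun_mono (BM.pseudoDist_nonneg _ _) h hρz
      have h₁ : hypDist ((Dz:ℝ):ℂ) ((t:ℝ):ℂ) ≤ hypDist z w := by
        rw [eDz, ← et']
        calc hypDist ((‖BM.G f z z‖ : ℝ) : ℂ) ((‖BM.G f z w‖ : ℝ) : ℂ)
            ≤ hypDist (BM.G f z z) (BM.G f z w) := BM.radial (hPz z hz) (hPz w hw)
          _ ≤ hypDist z w := hSP _ (BM.G_diff hf hmap hz) hPz
      have h₂ : hypDist ((t:ℝ):ℂ) ((Dw:ℝ):ℂ) ≤ hypDist z w := by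
        rw [eDw, ht]
        calc hypDist ((‖BM.G f w z‖ : ℝ) : ℂ) ((‖BM.G f w w‖ : ℝ) : ℂ)
            ≤ hypDist (BM.G f w z) (BM.G f w w) := BM.radial (hPw z hz) (hPw w hw)
          _ ≤ hypDist z w := hSP _ (BM.G_diff hf hmap hw) hPw
      calc hypDist ((Dz:ℝ):ℂ) ((Dw:ℝ):ℂ) = |Lfun Dz - Lfun Dw| :=
            BM.hypDist_real hDz0 hDz1 hDw0 hDw1
        _ ≤ |Lfun Dz - Lfun t| + |Lfun t - Lfun Dw| := abs_sub_le _ _ _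
        _ = hypDist ((Dz:ℝ):ℂ) ((t:ℝ):ℂ) + hypDist ((t:ℝ):ℂ) ((Dw:ℝ):ℂ) := by
            rw [BM.hypDist_real hDz0 hDz1 ht0 ht1, BM.hypDist_real ht0 ht1 hDw0 hDw1]
        _ ≤ hypDist z w + hypDist z w := add_le_add h₁ h₂
        _ = 2 * hypDist z w := by ring
    · -- impossible : G_z hits the boundary while G_w does not
      exfalso
      have hconst := BM.G_const_of_not_lt hf hmap hz hPz
      have h1 : ‖BM.G f z w‖ = 1 := hconst w hw
      have h2 := hPw z hz
      rw [← et', h1] at h2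
      exact lt_irrefl _ h2
  · -- G_w hits the boundary : both hyperbolic derivatives are 1
    have hconstw := BM.G_const_of_not_lt hf hmap hw hPw
    have ht : ‖BM.G f w z‖ = 1 := hconstw z hz
    have hPz : ¬ ∀ ζ ∈ ball (0:ℂ) 1, ‖BM.G f z ζ‖ < 1 := by
      intro hPz
      have := hPz w hw
      rw [et', ht] at this
      exact lt_irrefl _ this
    have hconstz := BM.G_const_of_not_lt hf hmap hz hPz
    have hDz : hypDeriv f z = 1 := by
      rw [← BM.G_at_base hf hmap hz]; exact hconstz z hz
    have hDw : hypDeriv f w = 1 := by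
      rw [← BM.G_at_base hf hmap hw]; exact hconstw w hw
    rw [hDz, hDw]
    have h0 : hypDist ((1:ℝ):ℂ) ((1:ℝ):ℂ) = 0 := BM.hypDist_self _
    rw [h0]
    have := BM.hypDist_nonneg hρz
    linarith
end
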